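/- arXiv:2002.04420 — 9 statements merged into one kernel-verified Lean document; each statement's English description precedes it below -/
import Mathlib

section
/- Let m ≥ 1 be an integer and let a₁, …, a_m be complex numbers with |a_i| = 1 for all i. Then ∏_{1 ≤ i < j ≤ m} |a_i − a_j| ≤ m^{m/2}. -/
/-!
The product is `‖det V‖` for the Vandermonde matrix `V = (a_i ^ j)`, whose entries all have
norm `1`. For any square matrix `A`, the Gram matrix `A * Aᴴ` is positive semidefinite with
determinant `‖det A‖ ^ 2` and trace `∑ ‖A i j‖ ^ 2`, so AM-GM on its eigenvalues gives
`‖det A‖ ^ 2 ≤ (trace / n) ^ n`. For `V` this is `m ^ m`.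
-/

open Finset Matrix
open scoped ComplexOrder

theorem Real.prod_le_mean_pow_card {ι : Type*} (s : Finset ι) (z : ι → ℝ)
    (hz : ∀ i ∈ s, 0 ≤ z i) : ∏ i ∈ s, z i ≤ ((∑ i ∈ s, z i) / #s) ^ #s := by
  rcases s.eq_empty_or_nonempty with rfl | hs
  · simp
  have hcard : (0 : ℝ) < #s := by exact_mod_cast hs.card_pos
  have hgm : ∏ i ∈ s, z i ^ (#s : ℝ)⁻¹ ≤ (∑ i ∈ s, z i) / #s := by
    simpa [inv_mul_eq_div, ← sum_div] using
      Real.geom_mean_le_arith_mean_weighted s (fun _ ↦ (#s : ℝ)⁻¹) z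
        (fun _ _ ↦ by positivity) (by simp [hcard.ne']) hz
  calc ∏ i ∈ s, z i = (∏ i ∈ s, z i ^ (#s : ℝ)⁻¹) ^ #s := by
        rw [Real.finsetProd_rpow s z hz, ← Real.rpow_natCast,
          ← Real.rpow_mul (prod_nonneg hz), inv_mul_cancel₀ hcard.ne', Real.rpow_one]
    _ ≤ ((∑ i ∈ s, z i) / #s) ^ #s :=
        pow_le_pow_left₀ (prod_nonneg fun i hi ↦ Real.rpow_nonneg (hz i hi) _) hgm _

variable {n 𝕜 : Type*} [Fintype n] [DecidableEq n] [RCLike 𝕜]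

theorem Matrix.PosSemidef.re_det_le_re_trace_div_card_pow {A : Matrix n n 𝕜}
    (hA : A.PosSemidef) :
    RCLike.re A.det ≤ (RCLike.re A.trace / Fintype.card n) ^ Fintype.card n := by
  rw [hA.isHermitian.det_eq_prod_eigenvalues, hA.isHermitian.trace_eq_sum_eigenvalues,
    ← RCLike.ofReal_prod, ← RCLike.ofReal_sum, RCLike.ofReal_re, RCLike.ofReal_re]
  exact Real.prod_le_mean_pow_card univ _ fun i _ ↦ hA.eigenvalues_nonneg i

theorem Matrix.norm_det_sq_le_of_forall_norm_le (A : Matrix n n 𝕜) {c : ℝ}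
    (hA : ∀ i j, ‖A i j‖ ≤ c) :
    ‖A.det‖ ^ 2 ≤ (Fintype.card n * c ^ 2) ^ Fintype.card n := by
  have hdet : RCLike.re (A * Aᴴ).det = ‖A.det‖ ^ 2 := by
    rw [det_mul, det_conjTranspose, RCLike.star_def, RCLike.mul_conj]
    norm_cast
  have htrace : RCLike.re (A * Aᴴ).trace = ∑ i, ∑ j, ‖A i j‖ ^ 2 := by
    simp [trace, mul_apply, RCLike.mul_conj]
  have hsum : ∑ i, ∑ j, ‖A i j‖ ^ 2 ≤ Fintype.card n * c ^ 2 * Fintype.card n := by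
    calc ∑ i, ∑ j, ‖A i j‖ ^ 2 ≤ ∑ _i : n, ∑ _j : n, c ^ 2 := by
          gcongr with i _ j
          exact hA i j
      _ = Fintype.card n * c ^ 2 * Fintype.card n := by simp [mul_comm]
  calc ‖A.det‖ ^ 2 ≤ (RCLike.re (A * Aᴴ).trace / Fintype.card n) ^ Fintype.card n :=
        hdet ▸ (posSemidef_self_mul_conjTranspose A).re_det_le_re_trace_div_card_pow
    _ ≤ _ := by
        rw [htrace]
        gcongr
        exact div_le_of_le_mul₀ (by positivity) (by positivity) hsum

theorem vandermonde_unit_circle_bound_general (m : ℕ) (a : Fin m → ℂ)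
    (ha : ∀ i, ‖a i‖ = 1) :
    ∏ i : Fin m, ∏ j ∈ Finset.Ioi i, ‖a i - a j‖ ≤ (m : ℝ) ^ ((m : ℝ) / 2) := by
  have hprod : ∏ i : Fin m, ∏ j ∈ Ioi i, ‖a i - a j‖ = ‖(vandermonde a).det‖ := by
    simp only [det_vandermonde, norm_prod]
    exact prod_congr rfl fun i _ ↦ prod_congr rfl fun j _ ↦ norm_sub_rev _ _
  have hsq : ‖(vandermonde a).det‖ ^ 2 ≤ (m : ℝ) ^ m := by
    simpa using (vandermonde a).norm_det_sq_le_of_forall_norm_le (c := 1)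
      fun i j ↦ by simp [ha]
  have hpow : (m : ℝ) ^ ((m : ℝ) / 2) = √((m : ℝ) ^ m) := by
    rw [Real.sqrt_eq_rpow, ← Real.rpow_natCast, ← Real.rpow_mul m.cast_nonneg]
    ring_nf
  rw [hprod, hpow]
  exact Real.le_sqrt (norm_nonneg _) (by positivity) |>.2 hsq

/-- If `a₁, …, a_m` are complex numbers of absolute value `1`, then
`∏_{1 ≤ i < j ≤ m} |a_i − a_j| ≤ m^(m/2)`. -/
theorem vandermonde_unit_circle_bound (m : ℕ) (hm : 1 ≤ m) (a : Fin m → ℂ)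
    (ha : ∀ i, ‖a i‖ = 1) :
    ∏ i : Fin m, ∏ j ∈ Finset.Ioi i, ‖a i - a j‖ ≤ (m : ℝ) ^ ((m : ℝ) / 2) :=
  vandermonde_unit_circle_bound_general m a ha
end

section
/- Let m ≥ 1 be an integer and let a₁, …, a_m be complex numbers with |a_i| = 1 for all i. Then equality ∏_{1 ≤ i < j ≤ m} |a_i − a_j| = m^{m/2} holds if and only if the numbers a₁, …, a_m are equidistributed on the unit circle, i.e., there exists c ∈ ℂ with |c| = 1 such that the multiset {a₁, …, a_m} equals the multiset of all m-th roots of c (equivalently, ∏_{i=1}^m (X − a_i) = X^m − c). -/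
/-!
Let `V` be the Vandermonde matrix of the `a i` and `G = V Vᴴ`. Its diagonal entries equal `m`
because `|a i| = 1`, and `det G = |det V|² = ∏_{i<j} |a i - a j|²`. By AM-GM on the eigenvalues of
the positive semidefinite matrix `G`, `det G ≤ (tr G / m)^m = m^m`, with equality exactly when
`G = m • 1`. The off-diagonal entries of `G` are the geometric sums `∑_{k<m} (a i / a j)^k`, so
`G = m • 1` says precisely that the quotients `a i / a j` (`i ≠ j`) are nontrivial `m`-th roots of
unity, i.e. the `a i` are the `m` distinct roots of `X^m - c` with `c = (a i)^m`.
Conversely, if `∏ (X - a i) = X^m - c`, then `∏_{j ≠ i} (a i - a j)` is the derivative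
`m (a i)^(m-1)` at the root `a i`, of absolute value `m`.
-/

open Polynomial Finset Matrix ComplexConjugate
open scoped ComplexOrder

theorem prod_prod_Ioi_norm_sub_sq {ι E : Type*} [LinearOrder ι] [Fintype ι]
    [LocallyFiniteOrderTop ι] [LocallyFiniteOrderBot ι] [SeminormedAddCommGroup E] (a : ι → E) :
    (∏ i, ∏ j ∈ Ioi i, ‖a i - a j‖) ^ 2 = ∏ i, ∏ j ∈ {i}ᶜ, ‖a i - a j‖ := by
  rw [← prod_prod_Ioi_mul_eq_prod_prod_off_diag (fun j i ↦ ‖a i - a j‖), sq, ← prod_mul_distrib]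
  refine prod_congr rfl fun i _ ↦ ?_
  rw [← prod_mul_distrib]
  exact prod_congr rfl fun j _ ↦ by rw [norm_sub_rev (a j)]

theorem Real.eq_rpow_half_iff_sq_eq {x y : ℝ} (hx : 0 ≤ x) (hy : 0 ≤ y) (n : ℕ) :
    x = y ^ ((n : ℝ) / 2) ↔ x ^ 2 = y ^ n := by
  rw [div_eq_mul_one_div, Real.rpow_mul hy, Real.rpow_natCast, ← Real.sqrt_eq_rpow, eq_comm,
    Real.sqrt_eq_iff_eq_sq (by positivity) hx, eq_comm]

theorem Real.eq_of_sum_eq_of_prod_eq_pow {ι : Type*} [Fintype ι] {x : ι → ℝ} {c : ℝ}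
    (hx : ∀ i, 0 ≤ x i) (hsum : ∑ i, x i = Fintype.card ι * c)
    (hprod : ∏ i, x i = c ^ Fintype.card ι) (i : ι) : x i = c := by
  have hn : (Fintype.card ι : ℝ) ≠ 0 := by have : Nonempty ι := ⟨i⟩; simp [Fintype.card_ne_zero]
  have hmean : ∑ j, (Fintype.card ι : ℝ)⁻¹ * x j = c := by
    rw [← mul_sum, hsum, inv_mul_cancel_left₀ hn]
  have hc : 0 ≤ c := hmean ▸ sum_nonneg fun j _ ↦ mul_nonneg (by positivity) (hx j)
  have hgeom : ∏ j, x j ^ (Fintype.card ι : ℝ)⁻¹ = c := by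
    rw [Real.finsetProd_rpow _ _ fun j _ ↦ hx j, hprod,
      Real.pow_rpow_inv_natCast hc (by exact_mod_cast hn)]
  have := (Real.geom_mean_eq_arith_mean_weighted_iff_of_pos' univ (fun _ ↦ _) x
    (fun _ _ ↦ by positivity) (by simp [hn]) fun j _ ↦ hx j).1 (hgeom.trans hmean.symm) i
    (mem_univ i)
  rwa [hmean] at this

namespace Matrix

section PosSemidef

variable {𝕜 n : Type*} [RCLike 𝕜] [Fintype n] [DecidableEq n] {A : Matrix n n 𝕜}

theorem IsHermitian.eq_smul_one_of_eigenvalues_eq (hA : A.IsHermitian) {c : ℝ}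
    (h : ∀ i, hA.eigenvalues i = c) : A = (c : 𝕜) • 1 := by
  have hdiag : diagonal (RCLike.ofReal ∘ hA.eigenvalues) = (c : 𝕜) • (1 : Matrix n n 𝕜) := by
    rw [smul_one_eq_diagonal]
    exact congrArg diagonal (funext fun i ↦ by simp [h i])
  rw [hA.spectral_theorem, hdiag, map_smul, map_one]

/-- The equality case of AM-GM for the eigenvalues: `det A ≤ (trace A / card n) ^ card n`. -/
theorem PosSemidef.eq_smul_one_of_trace_eq_of_det_eq (hA : A.PosSemidef) {c : ℝ}
    (htrace : A.trace = Fintype.card n * c) (hdet : A.det = c ^ Fintype.card n) :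
    A = (c : 𝕜) • 1 := by
  refine hA.isHermitian.eq_smul_one_of_eigenvalues_eq
    (Real.eq_of_sum_eq_of_prod_eq_pow hA.eigenvalues_nonneg ?_ ?_)
  · rw [hA.isHermitian.trace_eq_sum_eigenvalues] at htrace
    exact_mod_cast htrace
  · rw [hA.isHermitian.det_eq_prod_eigenvalues] at hdet
    exact_mod_cast hdet

end PosSemidef

theorem vandermonde_mul_conjTranspose_apply {R : Type*} [CommRing R] [StarRing R] {m : ℕ}
    (a : Fin m → R) (i j : Fin m) :
    (vandermonde a * (vandermonde a)ᴴ) i j = ∑ k : Fin m, (a i * star (a j)) ^ (k : ℕ) := by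
  simp [mul_apply, mul_pow]

theorem det_vandermonde_mul_conjTranspose {m : ℕ} (a : Fin m → ℂ) :
    (vandermonde a * (vandermonde a)ᴴ).det = ((∏ i, ∏ j ∈ Ioi i, ‖a i - a j‖) ^ 2 : ℝ) := by
  rw [det_mul, det_conjTranspose, Complex.star_def, Complex.mul_conj', det_vandermonde]
  push_cast [norm_prod]
  congr 1
  exact prod_congr rfl fun i _ ↦ prod_congr rfl fun j _ ↦ by rw [norm_sub_rev]

theorem vandermonde_mul_conjTranspose_eq_smul_one {m : ℕ} {a : Fin m → ℂ} (ha : ∀ i, ‖a i‖ = 1)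
    (hprod : (∏ i, ∏ j ∈ Ioi i, ‖a i - a j‖) ^ 2 = (m : ℝ) ^ m) :
    vandermonde a * (vandermonde a)ᴴ = (m : ℂ) • 1 := by
  have hunit : ∀ i, a i * conj (a i) = 1 := fun i ↦ by
    rw [Complex.mul_conj', ha, Complex.ofReal_one, one_pow]
  have h := (posSemidef_self_mul_conjTranspose (vandermonde a)).eq_smul_one_of_trace_eq_of_det_eq
    (c := m) (𝕜 := ℂ) ?_ ?_
  · simpa using h
  · simp [trace, vandermonde_mul_conjTranspose_apply, hunit]
  · rw [det_vandermonde_mul_conjTranspose, hprod, Fintype.card_fin]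
    norm_cast

end Matrix

theorem pow_eq_pow_and_ne_of_geom_sum_div_eq_zero {K : Type*} [Field K] [CharZero K] {x y : K}
    {m : ℕ} (hm : m ≠ 0) (hy : y ≠ 0) (h : ∑ k ∈ range m, (x / y) ^ k = 0) :
    x ^ m = y ^ m ∧ x ≠ y := by
  refine ⟨?_, fun hxy ↦ by simp [hxy, hy, hm] at h⟩
  have := geom_sum_mul (x / y) m
  rwa [h, zero_mul, eq_comm, sub_eq_zero, div_pow, div_eq_one_iff_eq (pow_ne_zero m hy)] at this

theorem Complex.pow_eq_pow_and_ne_of_geom_sum_mul_conj_eq_zero {x y : ℂ} (hy : ‖y‖ = 1) {m : ℕ}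
    (hm : m ≠ 0) (h : ∑ k ∈ range m, (x * conj y) ^ k = 0) : x ^ m = y ^ m ∧ x ≠ y := by
  rw [← Complex.inv_eq_conj hy, ← div_eq_mul_inv] at h
  exact pow_eq_pow_and_ne_of_geom_sum_div_eq_zero hm (norm_ne_zero_iff.1 (by simp [hy])) h

theorem prod_X_sub_C_eq_X_pow_sub_C {K ι : Type*} [Field K] [Fintype ι] {a : ι → K}
    (ha : Function.Injective a) {n : ℕ} (hn : n ≠ 0) (hcard : Fintype.card ι = n) {c : K}
    (hroot : ∀ i, a i ^ n = c) : ∏ i, (X - C (a i)) = X ^ n - C c := by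
  refine (eq_of_monic_of_dvd_of_natDegree_le (monic_prod_of_monic _ _ fun i _ ↦ monic_X_sub_C _)
    (monic_X_pow_sub_C c hn) ?_ ?_).symm
  · exact Fintype.prod_dvd_of_coprime (pairwise_coprime_X_sub_C ha) fun i ↦
      dvd_iff_isRoot.2 (by simp [hroot i])
  · rw [natDegree_X_pow_sub_C, natDegree_prod_of_monic _ _ fun i _ ↦ monic_X_sub_C _]
    simp [hcard]

theorem prod_erase_sub_eq_of_prod_X_sub_C_eq {R ι : Type*} [CommRing R] [Fintype ι]
    [DecidableEq ι] {a : ι → R} {n : ℕ} {c : R} (h : ∏ i, (X - C (a i)) = X ^ n - C c) (i : ι) :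
    ∏ j ∈ univ.erase i, (a i - a j) = n * a i ^ (n - 1) := by
  rw [← Lagrange.eval_nodal, ← Lagrange.eval_nodal_derivative_eval_node_eq (mem_univ i),
    Lagrange.nodal_eq, h]
  simp [derivative_X_pow]

theorem prod_compl_norm_sub_eq_of_prod_X_sub_C_eq {K ι : Type*} [RCLike K] [Fintype ι]
    [DecidableEq ι] {a : ι → K} (ha : ∀ i, ‖a i‖ = 1) {n : ℕ} {c : K}
    (h : ∏ i, (X - C (a i)) = X ^ n - C c) (i : ι) : ∏ j ∈ {i}ᶜ, ‖a i - a j‖ = n := by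
  rw [compl_eq_univ_sdiff, sdiff_singleton_eq_erase, ← norm_prod,
    prod_erase_sub_eq_of_prod_X_sub_C_eq h i, norm_mul, norm_pow, ha, one_pow, mul_one,
    RCLike.norm_natCast]

/-- For complex numbers `a₁, …, a_m` of absolute value `1`, equality
`∏_{1 ≤ i < j ≤ m} |a_i − a_j| = m^(m/2)` holds if and only if the `a_i` are
equidistributed on the unit circle, i.e. `∏ (X − a_i) = X^m − c` for some `c` with `|c| = 1`. -/
theorem vandermonde_unit_circle_eq_iff_equidistributed (m : ℕ) (hm : 1 ≤ m)
    (a : Fin m → ℂ) (ha : ∀ i, ‖a i‖ = 1) :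
    (∏ i : Fin m, ∏ j ∈ Finset.Ioi i, ‖a i - a j‖) = (m : ℝ) ^ ((m : ℝ) / 2) ↔
      ∃ c : ℂ, ‖c‖ = 1 ∧
        ∏ i : Fin m, (Polynomial.X - Polynomial.C (a i)) = Polynomial.X ^ m - Polynomial.C c := by
  rw [Real.eq_rpow_half_iff_sq_eq (by positivity) (by positivity)]
  constructor
  · intro hprod
    have hG := vandermonde_mul_conjTranspose_eq_smul_one ha hprod
    have hpair : ∀ i j, i ≠ j → a i ^ m = a j ^ m ∧ a i ≠ a j := fun i j hij ↦ by
      refine Complex.pow_eq_pow_and_ne_of_geom_sum_mul_conj_eq_zero (ha j) (by omega) ?_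
      have hoff := congrFun (congrFun hG i) j
      rw [vandermonde_mul_conjTranspose_apply] at hoff
      simpa [← Fin.sum_univ_eq_sum_range, hij] using hoff
    let i₀ : Fin m := ⟨0, hm⟩
    refine ⟨a i₀ ^ m, by simp [ha], prod_X_sub_C_eq_X_pow_sub_C (fun i j hij ↦ ?_) (by omega)
      (Fintype.card_fin m) fun i ↦ ?_⟩
    · by_contra hne
      exact (hpair i j hne).2 hij
    · rcases eq_or_ne i i₀ with rfl | hi
      · rfl
      · exact (hpair i i₀ hi).1
  · rintro ⟨c, -, hf⟩
    simp [prod_prod_Ioi_norm_sub_sq, prod_compl_norm_sub_eq_of_prod_X_sub_C_eq ha hf]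
end

section
/- Let d ≥ 1 and a ≥ 0 be integers and let t ≥ 1 be a real number. Then ∑_{λ ⊢ a} t^{d(a − ℓ(λ))} ≤ ∑_{μ ⊢ d·a} t^{d·a − ℓ(μ)}, where the left sum is over all partitions λ of a, the right sum is over all partitions μ of d·a, and ℓ(λ) denotes the number of parts of the partition λ. -/
/-! Multiplying every part by `d` injects the partitions of `a` into those of `d * a` without
changing the number of parts `ℓ`, and `d * (a - ℓ) ≤ d * a - ℓ`, so with `t ≥ 1` each term on
the left is bounded by a distinct nonnegative term on the right. -/

theorem Fintype.sum_le_sum_of_injective {ι κ M : Type*} [Fintype ι] [Fintype κ]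
    [AddCommMonoid M] [PartialOrder M] [IsOrderedAddMonoid M] {f : ι → M} {g : κ → M}
    (e : ι → κ) (he : Function.Injective e) (hfg : ∀ i, f i ≤ g (e i)) (hg : ∀ k, 0 ≤ g k) :
    ∑ i, f i ≤ ∑ k, g k :=
  calc ∑ i, f i
      ≤ ∑ i, g (e i) := Finset.sum_le_sum fun i _ => hfg i
    _ = ∑ k ∈ Finset.univ.map ⟨e, he⟩, g k := (Finset.sum_map _ ⟨e, he⟩ g).symm
    _ ≤ ∑ k, g k := Finset.sum_le_sum_of_subset_of_nonneg (Finset.subset_univ _)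
        fun k _ _ => hg k

namespace Nat.Partition

variable {n d : ℕ}

def scale (hd : 0 < d) (p : n.Partition) : (d * n).Partition where
  parts := p.parts.map (d * ·)
  parts_pos hi := by
    obtain ⟨j, hj, rfl⟩ := Multiset.mem_map.mp hi
    exact Nat.mul_pos hd (p.parts_pos hj)
  parts_sum := by rw [Multiset.sum_map_mul_left, Multiset.map_id', p.parts_sum]

@[simp]
lemma card_parts_scale (hd : 0 < d) (p : n.Partition) :
    (p.scale hd).parts.card = p.parts.card :=
  Multiset.card_map _ _

lemma scale_injective (hd : 0 < d) : Function.Injective (scale (n := n) hd) := fun _ _ h =>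
  Nat.Partition.ext <| Multiset.map_injective (fun _ _ => Nat.eq_of_mul_eq_mul_left hd) <|
    congrArg Nat.Partition.parts h

end Nat.Partition

theorem Nat.mul_sub_le_mul_sub {d : ℕ} (hd : 0 < d) (a k : ℕ) : d * (a - k) ≤ d * a - k := by
  rw [Nat.mul_sub]
  exact Nat.sub_le_sub_left (Nat.le_mul_of_pos_left k hd) _

/-- For `d ≥ 1`, `a ≥ 0` and a real `t ≥ 1`,
`∑_{λ ⊢ a} t^(d(a − ℓ(λ))) ≤ ∑_{μ ⊢ d·a} t^(d·a − ℓ(μ))`,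
where the sums are over partitions and `ℓ` denotes the number of parts. -/
theorem partition_sum_scale_le (d : ℕ) (hd : 1 ≤ d) (a : ℕ) (t : ℝ) (ht : 1 ≤ t) :
    ∑ lam : Nat.Partition a, t ^ (d * (a - lam.parts.card)) ≤
      ∑ mu : Nat.Partition (d * a), t ^ (d * a - mu.parts.card) := by
  refine Fintype.sum_le_sum_of_injective (Nat.Partition.scale hd) (Nat.Partition.scale_injective hd)
    (fun lam => ?_) (fun mu => pow_nonneg (zero_le_one.trans ht) _)
  rw [Nat.Partition.card_parts_scale]
  exact pow_le_pow_right₀ ht (Nat.mul_sub_le_mul_sub hd _ _)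
end

section
/- Let g ≥ 1 be an integer and let a₀, a₁, …, a_{2g} be complex numbers with a₀ ≠ 0. For t ∈ ℂ let f_t(X) := a₀X^{2g} + a₁X^{2g−1} + ⋯ + a_{g−1}X^{g+1} + t·X^g + a_{g+1}X^{g−1} + ⋯ + a_{2g}. Then there exists a polynomial Q ∈ ℂ[T] of degree strictly less than 2g such that for all t ∈ ℂ, disc(f_t) = g^{2g} a₀^{g−1} a_{2g}^{g−1} · t^{2g} + Q(t). In other words, the discriminant of f_t, viewed as a polynomial in the middle coefficient t, has degree at most 2g and the coefficient of t^{2g} equals g^{2g} a₀^{g−1} a_{2g}^{g−1}. -/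
/-!
Write `f_t = t X^g + h` and `n = 2g`. The polynomial `P = X h' - g h` equals `X f_t' - g f_t` for
every `t`, so `Res(f_t', g f_t) = Res(f_t', -P)`; hence, up to a sign and powers of `g` and `a₀`,
`Res(f_t, f_t') = ∏_{P(u) = 0} f_t'(u)`, with `P` independent of `t`. Each factor
`f_t'(u) = g u^{g-1} t + h'(u)` is affine in `t`, so the discriminant is a polynomial of degree at
most `2g` in `t` whose top coefficient is, up to those factors, `g^{2g} (∏ u)^{g-1}`; Vieta for `P`
gives `a₀ ∏ u = -a_{2g}`.
-/

open Polynomial Finset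

theorem Fin.prod_prod_erase_sub {R : Type*} [CommRing R] {n : ℕ} (r : Fin n → R) :
    ∏ i, ∏ j ∈ univ.erase i, (r i - r j) =
      (-1) ^ n.choose 2 * ∏ i, ∏ j ∈ Ioi i, (r i - r j) ^ 2 := by
  have hpairs : ∑ i : Fin n, #(Ioi i) = n.choose 2 := by
    simp_rw [Fin.card_Ioi]
    rw [Fin.sum_univ_eq_sum_range (fun i => n - 1 - i), sum_range_reflect (fun i => i),
      sum_range_id, Nat.choose_two_right]
  calc ∏ i, ∏ j ∈ univ.erase i, (r i - r j)
      = ∏ i, ∏ j ∈ Ioi i, (r i - r j) * (r j - r i) := by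
        rw [prod_prod_Ioi_mul_eq_prod_prod_off_diag (fun j i => r i - r j)]
        exact prod_congr rfl fun i _ => by rw [compl_singleton]
    _ = ∏ i, ∏ j ∈ Ioi i, (-1) * (r i - r j) ^ 2 := by
        refine prod_congr rfl fun i _ => prod_congr rfl fun j _ => by ring
    _ = (-1) ^ n.choose 2 * ∏ i, ∏ j ∈ Ioi i, (r i - r j) ^ 2 := by
        simp_rw [prod_mul_distrib, Finset.prod_const, prod_pow_eq_pow_sum, hpairs]

theorem neg_one_pow_choose_two_two_mul {R : Type*} [Monoid R] [HasDistribNeg R] (g : ℕ) :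
    (-1 : R) ^ (2 * g).choose 2 = (-1) ^ g := by
  have hpairs : (2 * g).choose 2 = 2 * (g * (g - 1)) + g := by
    rw [Nat.choose_two_right]
    rcases g with _ | g
    · rfl
    · refine Nat.div_eq_of_eq_mul_left two_pos ?_
      rw [show 2 * (g + 1) - 1 = 2 * g + 1 by omega, Nat.add_sub_cancel]
      ring
  rw [hpairs, pow_add, pow_mul, neg_one_sq, one_pow, one_mul]

namespace Polynomial

section CommRing

variable {R : Type*} [CommRing R]

theorem resultant_C_mul_prod_X_sub_C_derivative [Nontrivial R] {n : ℕ} (a : R) (r : Fin n → R) :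
    resultant (C a * ∏ i, (X - C (r i))) (derivative (C a * ∏ i, (X - C (r i)))) n (n - 1) =
      a ^ (2 * n - 1) * ∏ i, ∏ j ∈ univ.erase i, (r i - r j) := by
  classical
  have hN : (∏ i, (X - C (r i))).natDegree = n := by
    rw [← Lagrange.nodal_eq, Lagrange.natDegree_nodal, card_univ, Fintype.card_fin]
  have hD : (derivative (C a * ∏ i, (X - C (r i)))).natDegree ≤ n - 1 :=
    (natDegree_derivative_le _).trans
      (Nat.sub_le_sub_right ((natDegree_C_mul_le _ _).trans hN.le) 1)
  have heval (i : Fin n) : (derivative (C a * ∏ i, (X - C (r i)))).eval (r i) =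
      a * ∏ j ∈ univ.erase i, (r i - r j) := by
    rw [derivative_C_mul, eval_mul, eval_C, ← Lagrange.nodal_eq,
      Lagrange.eval_nodal_derivative_eval_node_eq (mem_univ i), Lagrange.eval_nodal]
  have hprod := resultant_prod_left univ (fun i => X - C (r i)) _ _ (by simp) hD
  rw [hN] at hprod
  rw [resultant_C_mul_left, hprod]
  simp_rw [natDegree_X_sub_C, resultant_X_sub_C_left _ _ _ hD, heval, prod_mul_distrib, prod_const,
    card_univ, Fintype.card_fin, ← mul_assoc, ← pow_add]
  congr 2
  omega

noncomputable def eulerDefect (k : ℕ) (p : R[X]) : R[X] := X * derivative p - C (k : R) * p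

theorem coeff_eulerDefect (k m : ℕ) (p : R[X]) :
    (eulerDefect k p).coeff m = ((m : R) - k) * p.coeff m := by
  rcases m with _ | m
  · simp [eulerDefect]
  · simp [eulerDefect, coeff_X_mul, coeff_derivative]
    ring

theorem eulerDefect_C_mul_X_pow_add (k : ℕ) (t : R) (p : R[X]) :
    eulerDefect k (C t * X ^ k + p) = eulerDefect k p := by
  ext m
  simp only [coeff_eulerDefect, coeff_add, coeff_C_mul_X_pow]
  split_ifs with hm <;> simp [hm]

theorem pow_mul_resultant_derivative (F : R[X]) (k : ℕ) {m n : ℕ}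
    (hD : (derivative F).natDegree ≤ m) (hmn : m + 1 ≤ n) :
    (k : R) ^ m * resultant F (derivative F) n m =
      (-1) ^ m * resultant (eulerDefect k F) (derivative F) n m := by
  have hF : C (k : R) * F = C (-1) * eulerDefect k F + derivative F * X := by
    simp only [eulerDefect, C_neg, C_1]; ring
  have hX : (X : R[X]).natDegree + m ≤ n := (Nat.add_le_add_right natDegree_X_le m).trans (by omega)
  rw [← resultant_C_mul_left, hF, resultant_add_mul_left _ _ _ _ _ hX hD, resultant_C_mul_left]

theorem natDegree_eulerDefect_le (k : ℕ) (p : R[X]) : (eulerDefect k p).natDegree ≤ p.natDegree :=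
  natDegree_le_iff_coeff_eq_zero.mpr fun m hm => by
    rw [coeff_eulerDefect, coeff_eq_zero_of_natDegree_lt hm, mul_zero]

theorem natDegree_eulerDefect [IsDomain R] {k : ℕ} {p : R[X]} (hk : (p.natDegree : R) ≠ k) :
    (eulerDefect k p).natDegree = p.natDegree := by
  rcases eq_or_ne p 0 with rfl | hp
  · simp [eulerDefect]
  refine le_antisymm (natDegree_eulerDefect_le k p) (le_natDegree_of_ne_zero ?_)
  rw [coeff_eulerDefect]
  exact mul_ne_zero (sub_ne_zero.mpr hk) (leadingCoeff_ne_zero.mpr hp)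

theorem leadingCoeff_eulerDefect [IsDomain R] {k : ℕ} {p : R[X]} (hk : (p.natDegree : R) ≠ k) :
    (eulerDefect k p).leadingCoeff = ((p.natDegree : R) - k) * p.leadingCoeff := by
  rw [leadingCoeff, natDegree_eulerDefect hk, coeff_eulerDefect, leadingCoeff]

theorem exists_eval_eq_multiset_prod_affine {ι : Type*} (s : Multiset ι) (α β : ι → R) :
    ∃ L : R[X], L.natDegree ≤ Multiset.card s ∧ L.coeff (Multiset.card s) = (s.map α).prod ∧
      ∀ t, L.eval t = (s.map fun i => α i * t + β i).prod := by
  have hlin : ∀ q ∈ s.map fun i => C (α i) * X + C (β i), q.natDegree ≤ 1 := by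
    simp only [Multiset.mem_map, forall_exists_index, and_imp, forall_apply_eq_imp_iff₂]
    exact fun i _ => natDegree_linear_le
  refine ⟨(s.map fun i => C (α i) * X + C (β i)).prod, ?_, ?_, fun t => ?_⟩
  · refine (natDegree_multiset_prod_le _).trans ?_
    simpa using Multiset.sum_map_le_sum_map _ _ hlin
  · simpa [Multiset.map_map] using coeff_multiset_prod_of_natDegree_le _ 1 hlin
  · simp [eval_multiset_prod, Multiset.map_map]

end CommRing

section AlgClosed

variable {K : Type*} [Field K] [CharZero K] {g : ℕ} {h : K[X]}

theorem natDegree_and_leadingCoeff_eulerDefect_of_natDegree_eq_two_mul (hg : 1 ≤ g)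
    (hh : h.natDegree = 2 * g) :
    (eulerDefect g h).natDegree = 2 * g ∧ (eulerDefect g h).leadingCoeff = g * h.leadingCoeff := by
  have hk : (h.natDegree : K) ≠ g := by
    rw [hh]; exact_mod_cast (show 2 * g ≠ g by omega)
  refine ⟨by rw [natDegree_eulerDefect hk, hh], ?_⟩
  rw [leadingCoeff_eulerDefect hk, hh]
  push_cast
  ring

variable [IsAlgClosed K]

theorem leadingCoeff_mul_prod_roots_eulerDefect (hg : 1 ≤ g) (hh : h.natDegree = 2 * g) :
    h.leadingCoeff * (eulerDefect g h).roots.prod = -h.coeff 0 := by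
  obtain ⟨hdeg, hlc⟩ := natDegree_and_leadingCoeff_eulerDefect_of_natDegree_eq_two_mul hg hh
  have hVieta := (IsAlgClosed.splits (eulerDefect g h)).coeff_zero_eq_leadingCoeff_mul_prod_roots
  rw [coeff_eulerDefect, hdeg, hlc, pow_mul, neg_one_sq, one_pow, one_mul] at hVieta
  have hg0 : (g : K) ≠ 0 := Nat.cast_ne_zero.mpr (by omega)
  apply mul_left_cancel₀ hg0
  linear_combination -hVieta

theorem disc_eq_prod_eval_derivative_roots_eulerDefect (hg : 1 ≤ g) (hh : h.natDegree = 2 * g)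
    {t : K} {r : Fin (2 * g) → K}
    (hr : C h.leadingCoeff * ∏ i, (X - C (r i)) = C t * X ^ g + h) :
    h.leadingCoeff ^ (2 * (2 * g) - 2) * ∏ i, ∏ j ∈ Ioi i, (r i - r j) ^ 2 =
      (-1) ^ (g + 1) * h.leadingCoeff ^ (2 * g - 2) *
        ((eulerDefect g h).roots.map fun u => (derivative (C t * X ^ g + h)).eval u).prod := by
  obtain ⟨hdeg, hlc⟩ := natDegree_and_leadingCoeff_eulerDefect_of_natDegree_eq_two_mul hg hh
  set a := h.leadingCoeff
  set F := C t * X ^ g + h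
  have ha : a ≠ 0 := leadingCoeff_ne_zero.mpr (by rintro rfl; simp at hh; omega)
  have hg0 : (g : K) ≠ 0 := Nat.cast_ne_zero.mpr (by omega)
  have hD : (derivative F).natDegree ≤ 2 * g - 1 :=
    (natDegree_derivative_le F).trans (Nat.sub_le_sub_right ((natDegree_add_le _ _).trans
      (max_le ((natDegree_C_mul_X_pow_le t g).trans (by omega)) hh.le)) 1)
  have hres := resultant_C_mul_prod_X_sub_C_derivative a r
  rw [hr, Fin.prod_prod_erase_sub, neg_one_pow_choose_two_two_mul] at hres
  have heuler := pow_mul_resultant_derivative F g (n := 2 * g) hD (by omega)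
  have hroots := resultant_eq_prod_eval _ _ _ hD (IsAlgClosed.splits (eulerDefect g h))
  rw [hdeg, hlc] at hroots
  -- `heuler` now equates the two root expressions of `Res(F, F')`: over the roots `r` of `F`
  -- and over the roots of `eulerDefect g h`.
  rw [eulerDefect_C_mul_X_pow_add, hroots, hres] at heuler
  obtain ⟨e, rfl⟩ : ∃ e, g = e + 1 := ⟨g - 1, by omega⟩
  have hsq : ((-1 : K) ^ (e + 1)) ^ 2 = 1 := by rw [← pow_mul, pow_mul', neg_one_sq, one_pow]
  simp only [show 2 * (2 * (e + 1)) - 2 = 4 * e + 2 by omega,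
    show 2 * (e + 1) - 2 = 2 * e by omega, show 2 * (e + 1) - 1 = 2 * e + 1 by omega,
    show 2 * (2 * (e + 1)) - 1 = 4 * e + 3 by omega] at heuler ⊢
  apply mul_left_cancel₀ (pow_ne_zero (2 * e + 1) (mul_ne_zero hg0 ha))
  rw [(Odd.neg_one_pow ⟨e, rfl⟩ : (-1 : K) ^ (2 * e + 1) = -1)] at heuler
  linear_combination (-1) ^ (e + 1) * a ^ (2 * e) * heuler -
    ((e + 1 : ℕ) : K) ^ (2 * e + 1) * a ^ (6 * e + 3) * (∏ i, ∏ j ∈ Ioi i, (r i - r j) ^ 2) * hsq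

theorem exists_eval_eq_disc_C_mul_X_pow_add (hg : 1 ≤ g) (hh : h.natDegree = 2 * g) :
    ∃ L : K[X], L.natDegree ≤ 2 * g ∧
      L.coeff (2 * g) = (g : K) ^ (2 * g) * h.leadingCoeff ^ (g - 1) * h.coeff 0 ^ (g - 1) ∧
      ∀ (t : K) (r : Fin (2 * g) → K),
        C h.leadingCoeff * ∏ i, (X - C (r i)) = C t * X ^ g + h →
          h.leadingCoeff ^ (2 * (2 * g) - 2) * ∏ i, ∏ j ∈ Ioi i, (r i - r j) ^ 2 = L.eval t := by
  have hcard : Multiset.card (eulerDefect g h).roots = 2 * g := by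
    rw [← (IsAlgClosed.splits _).natDegree_eq_card_roots,
      (natDegree_and_leadingCoeff_eulerDefect_of_natDegree_eq_two_mul hg hh).1]
  obtain ⟨L, hLdeg, hLcoeff, hLeval⟩ := exists_eval_eq_multiset_prod_affine (eulerDefect g h).roots
    (fun u => (g : K) * u ^ (g - 1)) (fun u => (derivative h).eval u)
  rw [hcard] at hLdeg hLcoeff
  refine ⟨C ((-1) ^ (g + 1) * h.leadingCoeff ^ (2 * g - 2)) * L,
    (natDegree_C_mul_le _ _).trans hLdeg, ?_, fun t r hr => ?_⟩
  · have hVieta := leadingCoeff_mul_prod_roots_eulerDefect hg hh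
    rw [coeff_C_mul, hLcoeff, Multiset.prod_map_mul, Multiset.prod_map_pow, Multiset.map_const',
      Multiset.prod_replicate, hcard]
    obtain ⟨e, rfl⟩ : ∃ e, g = e + 1 := ⟨g - 1, by omega⟩
    simp only [show 2 * (e + 1) - 2 = 2 * e by omega, Nat.add_sub_cancel, Multiset.map_id']
    have hpow : h.leadingCoeff ^ (2 * e) * (eulerDefect (e + 1) h).roots.prod ^ e =
        h.leadingCoeff ^ e * (-h.coeff 0) ^ e := by
      rw [← hVieta]; ring
    have hsq : ((-1 : K) ^ e) ^ 2 = 1 := by rw [← pow_mul, pow_mul', neg_one_sq, one_pow]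
    linear_combination (-1) ^ (e + 2) * ((e + 1 : ℕ) : K) ^ (2 * (e + 1)) * hpow +
      ((e + 1 : ℕ) : K) ^ (2 * (e + 1)) * h.leadingCoeff ^ e * h.coeff 0 ^ e * hsq
  · rw [disc_eq_prod_eval_derivative_roots_eulerDefect hg hh hr, eval_mul, eval_C, hLeval]
    congr 2
    refine Multiset.map_congr rfl fun u _ => ?_
    simp [derivative_X_pow]
    ring

end AlgClosed

section Semiring

variable {R : Type*} [Semiring R]

theorem natDegree_sum_C_mul_X_pow_sub_le (s : Finset ℕ) (n : ℕ)
    (a : ℕ → R) : (∑ i ∈ s, C (a i) * X ^ (n - i)).natDegree ≤ n :=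
  natDegree_sum_le_of_forall_le _ _ fun i _ => (natDegree_C_mul_X_pow_le _ _).trans (Nat.sub_le n i)

theorem coeff_sum_C_mul_X_pow_sub {s : Finset ℕ} {n : ℕ}
    (hs : ∀ i ∈ s, i ≤ n) (a : ℕ → R) {j : ℕ} (hj : j ∈ s) :
    (∑ i ∈ s, C (a i) * X ^ (n - i)).coeff (n - j) = a j := by
  rw [finsetSum_coeff, sum_eq_single_of_mem j hj fun i hi hij => ?_, coeff_C_mul_X_pow, if_pos rfl]
  rw [coeff_C_mul_X_pow, if_neg]
  have := hs i hi; have := hs j hj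
  omega

theorem degree_erase_lt_of_natDegree_le {p : R[X]} {n : ℕ} (hp : p.natDegree ≤ n) :
    (p.erase n).degree < n := by
  refine (degree_lt_iff_coeff_zero _ _).mpr fun m hm => ?_
  rw [coeff_erase]
  split_ifs with hmn
  · rfl
  · exact coeff_eq_zero_of_natDegree_lt (by omega)

theorem eval_eq_coeff_mul_pow_add_eval_erase (p : R[X]) (n : ℕ) (t : R) :
    p.eval t = p.coeff n * t ^ n + (p.erase n).eval t := by
  conv_lhs => rw [← monomial_add_erase p n]
  simp [eval_monomial]

end Semiring

end Polynomial

open Polynomial in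
/-- The discriminant of `f_t = a₀X^{2g} + ⋯ + a_{g−1}X^{g+1} + tX^g + a_{g+1}X^{g−1} + ⋯ + a_{2g}`,
viewed as a polynomial in the middle coefficient `t`, has degree at most `2g` with
leading coefficient `g^{2g} a₀^{g−1} a_{2g}^{g−1}`.  Here the discriminant is expressed via a
listing `r` of the roots with multiplicity as `a₀^{2·2g−2} ∏_{i<j} (r_i − r_j)²`. -/
theorem disc_middle_coefficient_leading_term (g : ℕ) (hg : 1 ≤ g) (a : ℕ → ℂ)
    (ha0 : a 0 ≠ 0) :
    ∃ Q : Polynomial ℂ, Q.degree < (2 * g : ℕ) ∧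
      ∀ (t : ℂ) (r : Fin (2 * g) → ℂ),
        C (a 0) * ∏ i, (X - C (r i)) =
            C t * X ^ g + ∑ i ∈ (Finset.range (2 * g + 1)).erase g, C (a i) * X ^ (2 * g - i) →
          (a 0) ^ (2 * (2 * g) - 2) * ∏ i : Fin (2 * g), ∏ j ∈ Finset.Ioi i, (r i - r j) ^ 2 =
            (g : ℂ) ^ (2 * g) * (a 0) ^ (g - 1) * (a (2 * g)) ^ (g - 1) * t ^ (2 * g) +
              Q.eval t := by
  set h := ∑ i ∈ (Finset.range (2 * g + 1)).erase g, C (a i) * X ^ (2 * g - i)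
  have hs : ∀ i ∈ (Finset.range (2 * g + 1)).erase g, i ≤ 2 * g := fun i hi => by
    simp only [Finset.mem_erase, Finset.mem_range] at hi; omega
  have hlead : h.coeff (2 * g) = a 0 := by
    simpa only [Nat.sub_zero] using coeff_sum_C_mul_X_pow_sub hs a (j := 0) (by simp; omega)
  have hconst : h.coeff 0 = a (2 * g) := by
    simpa only [Nat.sub_self] using coeff_sum_C_mul_X_pow_sub hs a (j := 2 * g) (by simp; omega)
  have hh : h.natDegree = 2 * g :=
    natDegree_eq_of_le_of_coeff_ne_zero (natDegree_sum_C_mul_X_pow_sub_le _ _ _) (hlead ▸ ha0)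
  have hlc : h.leadingCoeff = a 0 := by rw [leadingCoeff, hh, hlead]
  obtain ⟨L, hLdeg, hLcoeff, hLeval⟩ := exists_eval_eq_disc_C_mul_X_pow_add hg hh
  refine ⟨L.erase (2 * g), degree_erase_lt_of_natDegree_le hLdeg, fun t r hr => ?_⟩
  rw [← hlc, hLeval t r (by rwa [hlc]), eval_eq_coeff_mul_pow_add_eval_erase L (2 * g), hLcoeff,
    hconst]
end

section
/- Let p be a prime, g ≥ 1 an integer, and a₁, …, a_{g−1} integers. For an integer (or complex number) t, let F(a₁, …, a_{g−1}, t) be the monic polynomial (x^{2g} + p^g) + a₁(x^{2g−1} + p^{g−1}x) + a₂(x^{2g−2} + p^{g−2}x²) + ⋯ + a_{g−1}(x^{g+1} + p·x^{g−1}) + t·x^g. Then there exists a polynomial Q ∈ ℂ[T] of degree strictly less than 2g such that for all t, disc(F(a₁, …, a_{g−1}, t)) = g^{2g} p^{g(g−1)} t^{2g} + Q(t). -/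
/-!
Let `D_k` be the Dickson polynomials with parameter `p`, so that `D_k(x + p/x) = x^k + (p/x)^k`,
and put `ψ = D_g + ∑ aᵢ D_{g-i}` and `ψ_t = ψ + t`. Then `F(x) = x^g ψ_t(x + p/x)`, so `F`
factors as `∏ₖ (x² - bₖ x + p)` over the roots `bₖ` of `ψ_t`. Evaluating `F'` at the two roots of
each quadratic factor gives `disc F = p^{g(g-1)} ∏ₖ (bₖ² - 4p) · (∏ₖ ψ_t'(bₖ))²`.
With `c² = 4p` we have `∏ₖ (bₖ² - c²) = ψ_t(c) ψ_t(-c)`, and since `ψ_t' = ψ' = g ∏ₘ (x - βₘ)`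
does not depend on `t`, also `(∏ₖ ψ_t'(bₖ))² = g^{2g} ∏ₘ ψ_t(βₘ)²`. Each `ψ_t(z) = ψ(z) + t` is
monic linear in `t`, so `disc F` is `g^{2g} p^{g(g-1)}` times a monic polynomial of degree `2g`
in `t`.
-/

open Polynomial Finset

theorem Multiset.exists_eq_map_fin {α : Type*} (m : Multiset α) {n : ℕ} (hn : card m = n) :
    ∃ b : Fin n → α, m = univ.val.map b := by
  obtain ⟨l, rfl⟩ : ∃ l : List α, ↑l = m := ⟨m.toList, m.coe_toList⟩
  rw [Multiset.coe_card] at hn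
  subst hn
  exact ⟨l.get, by rw [Fin.univ_val_map, List.ofFn_get]⟩

namespace Polynomial

variable {R : Type*} [CommRing R]

theorem eval_derivative_prod_of_eval_eq_zero {ι : Type*} [DecidableEq ι] {s : Finset ι}
    {q : ι → R[X]} {k : ι} (hk : k ∈ s) {x : R} (hx : (q k).eval x = 0) :
    (derivative (∏ l ∈ s, q l)).eval x =
      (derivative (q k)).eval x * ∏ l ∈ s.erase k, (q l).eval x := by
  rw [derivative_prod_finset, eval_finsetSum, Finset.sum_eq_single_of_mem k hk, eval_mul,
    eval_prod, mul_comm]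
  intro l _ hlk
  rw [eval_mul, eval_prod, Finset.prod_eq_zero (Finset.mem_erase.2 ⟨Ne.symm hlk, hk⟩) hx,
    zero_mul]

theorem eval_derivative_prod_X_sub_C {ι : Type*} [Fintype ι] [DecidableEq ι] (r : ι → R)
    (i : ι) :
    (derivative (∏ j, (X - C (r j)))).eval (r i) = ∏ j ∈ univ.erase i, (r i - r j) := by
  rw [eval_derivative_prod_of_eval_eq_zero (mem_univ i) (by simp)]
  simp

theorem roots_prod_univ_X_sub_C {K ι : Type*} [Field K] [Fintype ι] (r : ι → K) :
    (∏ i, (X - C (r i))).roots = univ.val.map r := by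
  rw [← roots_multiset_prod_X_sub_C (univ.val.map r), Multiset.map_map]; rfl

theorem prod_eq_of_prod_X_sub_C_eq {K M : Type*} [Field K] [CommMonoid M] {ι κ : Type*}
    [Fintype ι] [Fintype κ] {r : ι → K} {s : κ → K}
    (h : ∏ i, (X - C (r i)) = ∏ j, (X - C (s j))) (φ : K → M) :
    ∏ i, φ (r i) = ∏ j, φ (s j) := by
  have := congrArg roots h
  rw [roots_prod_univ_X_sub_C, roots_prod_univ_X_sub_C] at this
  calc ∏ i, φ (r i) = ((univ.val.map r).map φ).prod := by rw [Multiset.map_map]; rfl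
    _ = ∏ j, φ (s j) := by rw [this, Multiset.map_map]; rfl

theorem exists_eq_C_mul_prod_X_sub_C {K : Type*} [Field K] [IsAlgClosed K]
    (f : K[X]) {n : ℕ} (hn : f.natDegree = n) :
    ∃ b : Fin n → K, f = C f.leadingCoeff * ∏ i, (X - C (b i)) := by
  obtain ⟨b, hb⟩ := f.roots.exists_eq_map_fin (IsAlgClosed.card_roots_eq_natDegree.trans hn)
  refine ⟨b, ?_⟩
  conv_lhs => rw [← C_leadingCoeff_mul_prod_multiset_X_sub_C
    (IsAlgClosed.card_roots_eq_natDegree (p := f)), hb, Multiset.map_map]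
  rfl

theorem dickson_one_eval_add (x y : R) :
    ∀ n, (dickson 1 (x * y) n).eval (x + y) = x ^ n + y ^ n
  | 0 => by norm_num
  | 1 => by simp
  | n + 2 => by
    simp only [dickson_add_two, eval_sub, eval_mul, eval_X, eval_C, dickson_one_eval_add x y n,
      dickson_one_eval_add x y (n + 1)]
    ring

theorem natDegree_dickson_le (k : ℕ) (a : R) : ∀ n, (dickson k a n).natDegree ≤ n
  | 0 => (natDegree_sub_le _ _).trans (by simp)
  | 1 => natDegree_X_le
  | n + 2 => by
    have h₁ := natDegree_dickson_le k a (n + 1)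
    have h₀ := natDegree_dickson_le k a n
    rw [dickson_add_two]
    refine (natDegree_sub_le _ _).trans (max_le (natDegree_mul_le.trans ?_)
      ((natDegree_C_mul_le _ _).trans (by omega)))
    have := natDegree_X_le (R := R)
    omega

theorem dickson_monic_and_natDegree [Nontrivial R] (k : ℕ) (a : R) :
    ∀ n, (dickson k a (n + 1)).Monic ∧ (dickson k a (n + 1)).natDegree = n + 1
  | 0 => by simp
  | n + 1 => by
    obtain ⟨hmonic, hdeg⟩ := dickson_monic_and_natDegree k a n
    have hX : (X * dickson k a (n + 1)).natDegree = n + 2 := by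
      rw [natDegree_X_mul hmonic.ne_zero, hdeg]
    have hlt : (C a * dickson k a n).natDegree < (X * dickson k a (n + 1)).natDegree :=
      hX ▸ (natDegree_C_mul_le _ _).trans_lt ((natDegree_dickson_le k a n).trans_lt (by omega))
    rw [dickson_add_two]
    exact ⟨(monic_X.mul hmonic).sub_of_left (degree_lt_degree hlt),
      (natDegree_sub_eq_left_of_natDegree_lt hlt).trans hX⟩

theorem sq_prod_eval_prod_X_sub_C_comm {ι κ : Type*} [Fintype ι] [Fintype κ] (b : ι → R)
    (β : κ → R) :
    (∏ k, (∏ m, (X - C (β m))).eval (b k)) ^ 2 =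
      (∏ m, (∏ k, (X - C (b k))).eval (β m)) ^ 2 := by
  simp only [eval_prod, eval_sub, eval_X, eval_C, ← prod_pow]
  rw [prod_comm]
  exact prod_congr rfl fun m _ => prod_congr rfl fun k _ => by ring

theorem prod_sq_sub_sq_eq_eval_mul_eval {ι : Type*} [Fintype ι] (b : ι → R) (c : R) :
    ∏ k, (b k ^ 2 - c ^ 2) =
      (∏ k, (X - C (b k))).eval c * (∏ k, (X - C (b k))).eval (-c) := by
  simp only [eval_prod, eval_sub, eval_X, eval_C, ← prod_mul_distrib]
  exact prod_congr rfl fun k _ => by ring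

end Polynomial

theorem Fin.prod_Ioi_sub_eq_neg_one_pow_mul_prod_Iio_sub {R : Type*} [CommRing R] {n : ℕ}
    (r : Fin n → R) :
    ∏ i, ∏ j ∈ Ioi i, (r i - r j) =
      (-1) ^ (n * (n - 1) / 2) * ∏ i, ∏ j ∈ Iio i, (r i - r j) := by
  have hN : ∑ i : Fin n, #(Iio i) = n * (n - 1) / 2 := by
    simp only [Fin.card_Iio]
    rw [Fin.sum_univ_eq_sum_range (fun i => i), sum_range_id]
  rw [Finset.prod_comm' (t' := univ) (s' := fun j => Iio j) (by simp), ← hN,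
    ← prod_pow_eq_pow_sum, ← prod_mul_distrib]
  refine prod_congr rfl fun i _ => ?_
  rw [pow_card_mul_prod]
  exact prod_congr rfl fun j _ => by ring

theorem Fin.prod_Ioi_sub_sq_eq_neg_one_pow_mul_prod_erase_sub {R : Type*} [CommRing R] {n : ℕ}
    (r : Fin n → R) :
    ∏ i, ∏ j ∈ Ioi i, (r i - r j) ^ 2 =
      (-1) ^ (n * (n - 1) / 2) * ∏ i, ∏ j ∈ univ.erase i, (r i - r j) := by
  have herase : ∀ i : Fin n, univ.erase i = Iio i ∪ Ioi i := fun i => by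
    ext j; simp [lt_or_lt_iff_ne, ne_comm]
  have hdisj : ∀ i : Fin n, Disjoint (Iio i) (Ioi i) := fun i =>
    disjoint_left.2 fun j hj hj' => (mem_Iio.1 hj).not_gt (mem_Ioi.1 hj')
  simp only [herase, prod_union (hdisj _), prod_mul_distrib, pow_two]
  rw [Fin.prod_Ioi_sub_eq_neg_one_pow_mul_prod_Iio_sub r]
  ring

section WeilPolynomial

variable {K : Type*}

-- `weilPoly p g a t` is `F(a₁, …, a_{g-1}, t)` and `realWeilPoly p g a` is `ψ`.
noncomputable def realWeilPoly [CommRing K] (p : K) (g : ℕ) (a : ℕ → K) : K[X] :=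
  dickson 1 p g + ∑ i ∈ Ioo 0 g, C (a i) * dickson 1 p (g - i)

noncomputable def weilPoly [CommRing K] (p : K) (g : ℕ) (a : ℕ → K) (t : K) : K[X] :=
  (X ^ (2 * g) + C (p ^ g)) +
    (∑ i ∈ Ioo 0 g, C (a i) * (X ^ (2 * g - i) + C (p ^ (g - i)) * X ^ i)) + C t * X ^ g

theorem realWeilPoly_add_C_monic_and_natDegree [CommRing K] [Nontrivial K] (p : K) {g : ℕ}
    (hg : g ≠ 0) (a : ℕ → K) (t : K) :
    (realWeilPoly p g a + C t).Monic ∧ (realWeilPoly p g a + C t).natDegree = g := by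
  obtain ⟨hmonic, hdeg⟩ := dickson_monic_and_natDegree 1 p (g - 1)
  rw [Nat.sub_add_cancel (Nat.one_le_iff_ne_zero.2 hg)] at hmonic hdeg
  have hlt : (∑ i ∈ Ioo 0 g, C (a i) * dickson 1 p (g - i) + C t).natDegree <
      (dickson 1 p g).natDegree := by
    rw [hdeg]
    refine (natDegree_add_le_of_degree_le (n := g - 1) ?_ ?_).trans_lt (by omega)
    · refine natDegree_sum_le_of_forall_le _ _ fun i hi => (natDegree_C_mul_le _ _).trans ?_
      obtain ⟨hi0, -⟩ := mem_Ioo.1 hi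
      exact (natDegree_dickson_le 1 p (g - i)).trans (by omega)
    · simp
  rw [realWeilPoly, add_assoc]
  exact ⟨hmonic.add_of_left (degree_lt_degree hlt),
    (natDegree_add_eq_left_of_natDegree_lt hlt).trans hdeg⟩

theorem eval_weilPoly [Field K] (p : K) (g : ℕ) (a : ℕ → K) (t : K) {x : K} (hx : x ≠ 0) :
    (weilPoly p g a t).eval x = x ^ g * (realWeilPoly p g a + C t).eval (x + p / x) := by
  have hxy : x * (p / x) = p := mul_div_cancel₀ p hx
  have hdickson : ∀ k ≤ g, x ^ g * (dickson 1 p k).eval (x + p / x) =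
      x ^ (g + k) + p ^ k * x ^ (g - k) := fun k hk => by
    obtain ⟨m, rfl⟩ := Nat.exists_eq_add_of_le hk
    have hD := dickson_one_eval_add x (p / x) k
    rw [hxy] at hD
    rw [hD, Nat.add_sub_cancel_left]
    calc x ^ (k + m) * (x ^ k + (p / x) ^ k)
        = x ^ (k + m + k) + (x * (p / x)) ^ k * x ^ m := by ring
      _ = _ := by rw [hxy]
  simp only [weilPoly, realWeilPoly, eval_add, eval_finsetSum, eval_mul, eval_C, eval_pow, eval_X,
    mul_add, mul_sum, hdickson g le_rfl, Nat.sub_self, pow_zero, mul_one, ← two_mul]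
  rw [mul_comm t]
  congr 2
  refine sum_congr rfl fun i hi => ?_
  obtain ⟨-, hig⟩ := mem_Ioo.1 hi
  rw [mul_left_comm (x ^ g), hdickson (g - i) (by omega), Nat.sub_sub_self hig.le,
    show g + (g - i) = 2 * g - i by omega]
  ring

theorem weilPoly_eq_prod [Field K] [Infinite K] (p : K) (g : ℕ) (a : ℕ → K) (t : K)
    {b : Fin g → K} (hb : realWeilPoly p g a + C t = ∏ k, (X - C (b k))) :
    weilPoly p g a t = ∏ k, (X ^ 2 - C (b k) * X + C p) := by
  refine eq_of_infinite_eval_eq _ _ ((Set.finite_singleton 0).infinite_compl.mono fun x hx => ?_)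
  rw [Set.mem_ofPred_eq, eval_weilPoly p g a t hx, hb, eval_prod, eval_prod, ← Fin.prod_const,
    ← prod_mul_distrib]
  refine prod_congr rfl fun k _ => ?_
  simp only [eval_sub, eval_add, eval_mul, eval_pow, eval_X, eval_C]
  field_simp [show x ≠ 0 from hx]
  ring

end WeilPolynomial

section ProductOfQuadratics

variable {K : Type*}

theorem eval_derivative_prod_quadratic [CommRing K] {n : ℕ} (b : Fin n → K) (p : K) {k : Fin n}
    {z : K} (hz : z ^ 2 - b k * z + p = 0) :
    (derivative (∏ l, (X ^ 2 - C (b l) * X + C p))).eval z =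
      (2 * z - b k) * z ^ (n - 1) * ∏ l ∈ univ.erase k, (b k - b l) := by
  rw [eval_derivative_prod_of_eval_eq_zero (mem_univ k) (by simpa using hz)]
  have hfactor : ∀ l, (X ^ 2 - C (b l) * X + C p).eval z = (b k - b l) * z := fun l => by
    simp only [eval_add, eval_sub, eval_mul, eval_pow, eval_X, eval_C]
    linear_combination hz
  simp only [hfactor, prod_mul_distrib, prod_const, card_erase_of_mem (mem_univ k), card_univ,
    Fintype.card_fin, derivative_add, derivative_sub, derivative_X_pow, derivative_C_mul_X,
    derivative_C, eval_add, eval_sub, eval_mul, eval_C, eval_X, eval_pow, eval_zero]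
  push_cast
  ring

theorem eval_derivative_prod_quadratic_mul [CommRing K] {n : ℕ} (b : Fin n → K) (p : K)
    {k : Fin n} {x y : K} (hsum : x + y = b k) (hprod : x * y = p) :
    (derivative (∏ l, (X ^ 2 - C (b l) * X + C p))).eval x *
        (derivative (∏ l, (X ^ 2 - C (b l) * X + C p))).eval y =
      (4 * p - b k ^ 2) * p ^ (n - 1) * (∏ l ∈ univ.erase k, (b k - b l)) ^ 2 := by
  rw [eval_derivative_prod_quadratic b p (z := x) (by rw [← hsum, ← hprod]; ring),
    eval_derivative_prod_quadratic b p (z := y) (by rw [← hsum, ← hprod]; ring), ← hprod,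
    ← hsum]
  ring

theorem prod_Ioi_sub_sq_of_eq_prod_quadratic [Field K] [IsAlgClosed K] {n : ℕ} (b : Fin n → K)
    (p : K) {r : Fin (2 * n) → K}
    (hr : ∏ i, (X - C (r i)) = ∏ k, (X ^ 2 - C (b k) * X + C p)) :
    ∏ i, ∏ j ∈ Ioi i, (r i - r j) ^ 2 =
      p ^ (n * (n - 1)) * (∏ k, (b k ^ 2 - 4 * p)) *
        (∏ k, ∏ l ∈ univ.erase k, (b k - b l)) ^ 2 := by
  have hroot : ∀ k, ∃ x, x ^ 2 - b k * x + p = 0 := fun k => by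
    have hdeg : (X ^ 2 - C (b k) * X + C p).degree = 2 := by compute_degree!
    obtain ⟨x, hx⟩ := IsAlgClosed.exists_root _ (hdeg ▸ two_ne_zero)
    exact ⟨x, by simpa using hx⟩
  choose x hx using hroot
  set y : Fin n → K := fun k => b k - x k
  have hsum : ∀ k, x k + y k = b k := fun k => add_sub_cancel _ _
  have hprod : ∀ k, x k * y k = p := fun k => by linear_combination -hx k
  have hfactor : ∏ i, (X - C (r i)) = ∏ j : Fin n ⊕ Fin n, (X - C (Sum.elim x y j)) := by
    rw [hr, Fintype.prod_sum_type, ← prod_mul_distrib]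
    refine prod_congr rfl fun k _ => ?_
    simp only [Sum.elim_inl, Sum.elim_inr, ← hsum k, ← hprod k, C_add, C_mul]
    ring
  have hsign : (-1 : K) ^ (2 * n * (2 * n - 1) / 2) = (-1) ^ n := by
    rw [mul_assoc, Nat.mul_div_cancel_left _ two_pos, pow_mul']
    rcases Nat.eq_zero_or_pos n with rfl | hn
    · simp
    · rw [Odd.neg_one_pow ⟨n - 1, by omega⟩]
  have hneg : ∏ k, (b k ^ 2 - 4 * p) = (-1) ^ n * ∏ k, (4 * p - b k ^ 2) := by
    rw [← Fin.prod_const n (-1 : K), ← prod_mul_distrib]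
    exact prod_congr rfl fun k _ => by ring
  set F := ∏ k, (X ^ 2 - C (b k) * X + C p)
  calc ∏ i, ∏ j ∈ Ioi i, (r i - r j) ^ 2
      = (-1) ^ n * ∏ i, (derivative F).eval (r i) := by
        simp only [Fin.prod_Ioi_sub_sq_eq_neg_one_pow_mul_prod_erase_sub,
          ← eval_derivative_prod_X_sub_C, hr, hsign]
    _ = (-1) ^ n * ∏ j : Fin n ⊕ Fin n, (derivative F).eval (Sum.elim x y j) := by
        rw [prod_eq_of_prod_X_sub_C_eq hfactor fun z => (derivative F).eval z]
    _ = (-1) ^ n * ∏ k, ((4 * p - b k ^ 2) * p ^ (n - 1) *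
          (∏ l ∈ univ.erase k, (b k - b l)) ^ 2) := by
        rw [Fintype.prod_sum_type, ← prod_mul_distrib]
        simp only [Sum.elim_inl, Sum.elim_inr]
        exact congrArg _ (prod_congr rfl fun k _ =>
          eval_derivative_prod_quadratic_mul b p (hsum k) (hprod k))
    _ = _ := by
        rw [hneg, prod_mul_distrib, prod_mul_distrib, Fin.prod_const, prod_pow]
        ring

end ProductOfQuadratics

theorem prod_Ioi_sub_sq_of_eq_weilPoly {K : Type*} [Field K] [IsAlgClosed K] {p : K} {g : ℕ}
    (hg : g ≠ 0) (a : ℕ → K) {c : K} (hc : c ^ 2 = 4 * p) {m : ℕ} {β : Fin m → K}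
    (hβ : derivative (realWeilPoly p g a) = C (g : K) * ∏ j, (X - C (β j))) {t : K}
    {r : Fin (2 * g) → K} (hr : ∏ i, (X - C (r i)) = weilPoly p g a t) :
    ∏ i, ∏ j ∈ Ioi i, (r i - r j) ^ 2 =
      (g : K) ^ (2 * g) * p ^ (g * (g - 1)) *
        (((realWeilPoly p g a).eval c + t) * ((realWeilPoly p g a).eval (-c) + t) *
          ∏ j, ((realWeilPoly p g a).eval (β j) + t) ^ 2) := by
  obtain ⟨hmonic, hdeg⟩ := realWeilPoly_add_C_monic_and_natDegree p hg a t
  obtain ⟨b, hb⟩ := exists_eq_C_mul_prod_X_sub_C _ hdeg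
  rw [hmonic.leadingCoeff, C_1, one_mul] at hb
  have heval : ∀ z, (∏ k, (X - C (b k))).eval z = (realWeilPoly p g a).eval z + t := fun z => by
    rw [← hb, eval_add, eval_C]
  have hD : ∀ k, ∏ l ∈ univ.erase k, (b k - b l) = g * (∏ j, (X - C (β j))).eval (b k) :=
    fun k => by
      rw [← eval_derivative_prod_X_sub_C, ← hb, derivative_add, derivative_C, add_zero, hβ,
        eval_mul, eval_C]
  rw [prod_Ioi_sub_sq_of_eq_prod_quadratic b p (hr.trans (weilPoly_eq_prod p g a t hb)), ← hc,
    prod_sq_sub_sq_eq_eval_mul_eval, prod_congr rfl fun k _ => hD k, prod_mul_distrib,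
    Fin.prod_const, mul_pow, sq_prod_eval_prod_X_sub_C_comm, heval, heval, ← prod_pow]
  simp only [heval]
  ring

theorem exists_monic_prod_Ioi_sub_sq_eq_weilPoly {K : Type*} [Field K] [IsAlgClosed K]
    [CharZero K] (p : K) {g : ℕ} (hg : g ≠ 0) (a : ℕ → K) :
    ∃ P : K[X], P.Monic ∧ P.natDegree = 2 * g ∧
      ∀ (t : K) (r : Fin (2 * g) → K), ∏ i, (X - C (r i)) = weilPoly p g a t →
        ∏ i, ∏ j ∈ Ioi i, (r i - r j) ^ 2 =
          (g : K) ^ (2 * g) * p ^ (g * (g - 1)) * P.eval t := by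
  set ψ := realWeilPoly p g a
  obtain ⟨hmonic, hdeg⟩ := realWeilPoly_add_C_monic_and_natDegree p hg a 0
  rw [C_0, add_zero] at hmonic hdeg
  obtain ⟨β, hβ⟩ :=
    exists_eq_C_mul_prod_X_sub_C (derivative ψ) (by rw [natDegree_derivative, hdeg])
  rw [leadingCoeff_derivative, hmonic.leadingCoeff, hdeg, one_mul] at hβ
  obtain ⟨c, hc⟩ := IsAlgClosed.exists_pow_nat_eq (4 * p) two_pos
  have hlin : ∀ z, (X + C (ψ.eval z)).Monic := fun z => monic_X_add_C _
  have hsq : (∏ j, (X + C (ψ.eval (β j))) ^ 2).Monic :=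
    monic_prod_of_monic _ _ fun j _ => (hlin _).pow 2
  refine ⟨(X + C (ψ.eval c)) * (X + C (ψ.eval (-c))) * ∏ j, (X + C (ψ.eval (β j))) ^ 2,
    ((hlin _).mul (hlin _)).mul hsq, ?_, fun t r hr => ?_⟩
  · rw [((hlin _).mul (hlin _)).natDegree_mul hsq, (hlin _).natDegree_mul (hlin _),
      natDegree_prod_of_monic _ _ fun j _ => (hlin _).pow 2]
    simp only [natDegree_pow, natDegree_X_add_C, sum_const, card_univ, Fintype.card_fin,
      smul_eq_mul]
    omega
  · rw [prod_Ioi_sub_sq_of_eq_weilPoly hg a hc hβ hr]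
    simp only [ψ, eval_mul, eval_prod, eval_pow, eval_add, eval_X, eval_C, add_comm t]

open Polynomial in
theorem disc_F_leading_term_general (p : ℕ) (g : ℕ) (hg : 1 ≤ g) (a : ℕ → ℤ) :
    ∃ Q : Polynomial ℂ, Q.degree < (2 * g : ℕ) ∧
      ∀ (t : ℂ) (r : Fin (2 * g) → ℂ),
        (∏ i, (X - C (r i))) =
            (X ^ (2 * g) + C ((p : ℂ) ^ g)) +
              (∑ i ∈ Finset.Ioo 0 g,
                C ((a i : ℂ)) * (X ^ (2 * g - i) + C ((p : ℂ) ^ (g - i)) * X ^ i)) +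
              C t * X ^ g →
          ∏ i : Fin (2 * g), ∏ j ∈ Finset.Ioi i, (r i - r j) ^ 2 =
            (g : ℂ) ^ (2 * g) * (p : ℂ) ^ (g * (g - 1)) * t ^ (2 * g) + Q.eval t := by
  obtain ⟨P, hmonic, hdeg, hdisc⟩ :=
    exists_monic_prod_Ioi_sub_sq_eq_weilPoly (p : ℂ) (Nat.one_le_iff_ne_zero.1 hg)
      fun i => (a i : ℂ)
  set A := (g : ℂ) ^ (2 * g) * (p : ℂ) ^ (g * (g - 1))
  refine ⟨A • P.eraseLead, ?_, fun t r hr => ?_⟩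
  · calc (A • P.eraseLead).degree ≤ P.eraseLead.degree := degree_smul_le _ _
      _ < P.degree := degree_eraseLead_lt hmonic.ne_zero
      _ = (2 * g : ℕ) := by rw [degree_eq_natDegree hmonic.ne_zero, hdeg]
  · have hP : P.eval t = t ^ (2 * g) + P.eraseLead.eval t := by
      conv_lhs => rw [← P.eraseLead_add_C_mul_X_pow, hmonic.leadingCoeff, hdeg]
      simp only [eval_add, eval_mul, eval_C, eval_pow, eval_X, one_mul, add_comm]
    rw [hdisc t r hr, hP, eval_smul, smul_eq_mul, mul_add]

open Polynomial in
/-- The discriminant of the monic polynomial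
`F(a₁,…,a_{g−1},t) = (x^{2g}+p^g) + a₁(x^{2g−1}+p^{g−1}x) + ⋯ + a_{g−1}(x^{g+1}+p·x^{g−1}) + t·x^g`,
viewed as a polynomial in `t`, equals `g^{2g} p^{g(g−1)} t^{2g}` plus lower-order terms in `t`.
The discriminant is expressed via a listing `r` of the roots with multiplicity as
`∏_{i<j} (r_i − r_j)²`. -/
theorem disc_F_leading_term (p : ℕ) (hp : p.Prime) (g : ℕ) (hg : 1 ≤ g) (a : ℕ → ℤ) :
    ∃ Q : Polynomial ℂ, Q.degree < (2 * g : ℕ) ∧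
      ∀ (t : ℂ) (r : Fin (2 * g) → ℂ),
        (∏ i, (X - C (r i))) =
            (X ^ (2 * g) + C ((p : ℂ) ^ g)) +
              (∑ i ∈ Finset.Ioo 0 g,
                C ((a i : ℂ)) * (X ^ (2 * g - i) + C ((p : ℂ) ^ (g - i)) * X ^ i)) +
              C t * X ^ g →
          ∏ i : Fin (2 * g), ∏ j ∈ Finset.Ioi i, (r i - r j) ^ 2 =
            (g : ℂ) ^ (2 * g) * (p : ℂ) ^ (g * (g - 1)) * t ^ (2 * g) + Q.eval t :=
  disc_F_leading_term_general p g hg a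
end

section
/- For every ε > 0 there exists g₀ = g₀(ε) > 0 (depending only on ε) such that for every prime p, every integer g ≥ g₀, and every monic real polynomial f of degree 2g, the Lebesgue measure of the set { x ∈ [−2p^{g/2}/g, 2p^{g/2}/g] : |f(x)| ≤ p^{g²(1−ε)} } is at most p^{g/2}/g. -/
/-!
Over `ℂ`, a monic `f` of degree `n` factors as `∏ (x - zᵢ)`, so `|f x| ≥ ‖x - z‖ ^ n` for the
root `z` nearest to `x`. Hence `|f x| ≤ r ^ n` puts `x` within `r` of `Re z` for some root `z`,
and the sublevel set is covered by `n` intervals of length `2r`. With `n = 2g` and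
`r = p ^ (g(1-ε)/2)` the total length `4gr` is at most `p ^ (g/2) / g` as soon as
`4g² ≤ p ^ (εg/2)`, which holds for all large `g` uniformly in `p ≥ 2`.
-/

open Filter MeasureTheory Polynomial

theorem Polynomial.Monic.exists_root_norm_sub_pow_le_norm_eval {K : Type*} [NormedField K]
    {f : K[X]} (hf : f.Monic) (hs : f.Splits) (h0 : f.natDegree ≠ 0) (x : K) :
    ∃ z ∈ f.roots, ‖x - z‖ ^ f.natDegree ≤ ‖f.eval x‖ := by
  classical
  have hne : f.roots.toFinset.Nonempty := by
    rw [Multiset.toFinset_nonempty, Ne, ← Multiset.card_eq_zero, ← hs.natDegree_eq_card_roots]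
    exact h0
  obtain ⟨z, hz, hmin⟩ := f.roots.toFinset.exists_min_image (fun z => ‖x - z‖) hne
  refine ⟨z, Multiset.mem_toFinset.mp hz, ?_⟩
  calc ‖x - z‖ ^ f.natDegree = (f.roots.map fun _ => ‖x - z‖).prod := by
        rw [Multiset.map_const', Multiset.prod_replicate, ← hs.natDegree_eq_card_roots]
    _ ≤ (f.roots.map fun w => ‖x - w‖).prod :=
        Multiset.prod_map_le_prod_map₀ _ _ (fun _ _ => norm_nonneg _)
          fun w hw => hmin w (Multiset.mem_toFinset.mpr hw)
    _ = ‖f.eval x‖ := by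
        rw [hs.eval_eq_prod_roots_of_monic hf, ← normHom_apply, map_multiset_prod,
          Multiset.map_map]
        rfl

theorem Polynomial.Monic.setOf_abs_eval_le_pow_subset {f : ℝ[X]} (hf : f.Monic)
    (h0 : f.natDegree ≠ 0) {r : ℝ} (hr : 0 ≤ r) :
    {x | |f.eval x| ≤ r ^ f.natDegree} ⊆ ⋃ z ∈ (f.aroots ℂ).toFinset, Metric.closedBall z.re r := by
  intro x hx
  have hdeg : (f.map (algebraMap ℝ ℂ)).natDegree = f.natDegree :=
    natDegree_map_eq_of_injective (algebraMap ℝ ℂ).injective f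
  obtain ⟨z, hz, hpow⟩ := (hf.map (algebraMap ℝ ℂ)).exists_root_norm_sub_pow_le_norm_eval
    (IsAlgClosed.splits _) (hdeg ▸ h0) (x : ℂ)
  have heval : aeval (x : ℂ) f = ((f.eval x : ℝ) : ℂ) := (ofReal_eval f x).symm
  rw [hdeg, eval_map_algebraMap, heval, Complex.norm_real, Real.norm_eq_abs] at hpow
  have hnorm : ‖(x : ℂ) - z‖ ≤ r :=
    le_of_pow_le_pow_left₀ h0 hr (hpow.trans hx)
  refine Set.mem_biUnion (Multiset.mem_toFinset.mpr hz) ?_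
  rw [Metric.mem_closedBall, Real.dist_eq]
  calc |x - z.re| = |((x : ℂ) - z).re| := by simp
    _ ≤ ‖(x : ℂ) - z‖ := Complex.abs_re_le_norm _
    _ ≤ r := hnorm

theorem Polynomial.Monic.volume_setOf_abs_eval_le_pow_le {f : ℝ[X]} (hf : f.Monic)
    (h0 : f.natDegree ≠ 0) {r : ℝ} (hr : 0 ≤ r) :
    volume {x | |f.eval x| ≤ r ^ f.natDegree} ≤ ENNReal.ofReal (f.natDegree * (2 * r)) := by
  calc volume {x | |f.eval x| ≤ r ^ f.natDegree}
      ≤ ∑ z ∈ (f.aroots ℂ).toFinset, volume (Metric.closedBall z.re r) :=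
        (measure_mono (hf.setOf_abs_eval_le_pow_subset h0 hr)).trans
          (measure_biUnion_finset_le _ _)
    _ = (f.aroots ℂ).toFinset.card * ENNReal.ofReal (2 * r) := by
        simp [Real.volume_closedBall]
    _ ≤ f.natDegree * ENNReal.ofReal (2 * r) := by
        gcongr
        exact_mod_cast (Multiset.toFinset_card_le _).trans
          (IsAlgClosed.card_roots_map_eq_natDegree_from_simpleRing _ _).le
    _ = ENNReal.ofReal (f.natDegree * (2 * r)) := by
        rw [ENNReal.ofReal_mul (Nat.cast_nonneg _), ENNReal.ofReal_natCast]

theorem eventually_four_mul_sq_le_rpow {c : ℝ} (hc : 0 < c) :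
    ∀ᶠ n : ℕ in atTop, ∀ b : ℝ, 2 ≤ b → 4 * (n : ℝ) ^ 2 ≤ b ^ (c * n) := by
  have hlog : 0 < Real.log 2 * c := mul_pos (Real.log_pos one_lt_two) hc
  have hbound := ((isLittleO_pow_exp_pos_mul_atTop 2 hlog).bound (c := 1 / 4) (by norm_num))
  filter_upwards [tendsto_natCast_atTop_atTop.eventually hbound] with n hn b hb
  have hbase : 4 * (n : ℝ) ^ 2 ≤ 2 ^ (c * n) := by
    rw [Real.rpow_def_of_pos two_pos, ← mul_assoc]
    simp only [Real.norm_eq_abs, abs_pow, Nat.abs_cast, Real.abs_exp] at hn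
    linarith
  exact hbase.trans (Real.rpow_le_rpow zero_le_two hb (by positivity))

/-- For every `ε > 0` there is `g₀ = g₀(ε) > 0` such that for every prime `p`, every `g ≥ g₀`
and every monic real polynomial `f` of degree `2g`, the Lebesgue measure of
`{ x ∈ [−2p^{g/2}/g, 2p^{g/2}/g] : |f(x)| ≤ p^{g²(1−ε)} }` is at most `p^{g/2}/g`. -/
theorem small_values_measure_bound (ε : ℝ) (hε : 0 < ε) :
    ∃ g₀ : ℕ, 0 < g₀ ∧ ∀ (p : ℕ), p.Prime → ∀ g : ℕ, g₀ ≤ g →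
      ∀ f : Polynomial ℝ, f.Monic → f.natDegree = 2 * g →
        MeasureTheory.volume
            {x : ℝ | x ∈ Set.Icc (-(2 * (p : ℝ) ^ ((g : ℝ) / 2) / g))
                (2 * (p : ℝ) ^ ((g : ℝ) / 2) / g) ∧
              |f.eval x| ≤ (p : ℝ) ^ ((g : ℝ) ^ 2 * (1 - ε))} ≤
          ENNReal.ofReal ((p : ℝ) ^ ((g : ℝ) / 2) / g) := by
  obtain ⟨g₁, hg₁⟩ := eventually_atTop.mp (eventually_four_mul_sq_le_rpow (half_pos hε))
  refine ⟨max g₁ 1, by positivity, fun p hp g hg f hf hdeg => ?_⟩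
  have hg0 : (0 : ℝ) < g := by exact_mod_cast (le_max_right _ _).trans hg
  have hp2 : (2 : ℝ) ≤ p := by exact_mod_cast hp.two_le
  have hp0 : (0 : ℝ) < p := by linarith
  set r : ℝ := (p : ℝ) ^ ((g : ℝ) * (1 - ε) / 2)
  have hthreshold : (p : ℝ) ^ ((g : ℝ) ^ 2 * (1 - ε)) = r ^ f.natDegree := by
    rw [hdeg, ← Real.rpow_natCast r, ← Real.rpow_mul hp0.le]
    push_cast
    ring_nf
  have hsplit : (p : ℝ) ^ ((g : ℝ) / 2) = r * (p : ℝ) ^ (ε / 2 * g) := by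
    rw [← Real.rpow_add hp0]
    ring_nf
  have hwidth : f.natDegree * (2 * r) ≤ (p : ℝ) ^ ((g : ℝ) / 2) / g := by
    rw [le_div_iff₀ hg0, hsplit, hdeg]
    calc ((2 * g : ℕ) : ℝ) * (2 * r) * g = 4 * (g : ℝ) ^ 2 * r := by push_cast; ring
      _ ≤ (p : ℝ) ^ (ε / 2 * g) * r :=
        mul_le_mul_of_nonneg_right (hg₁ g ((le_max_left _ _).trans hg) p hp2) (by positivity)
      _ = r * (p : ℝ) ^ (ε / 2 * g) := mul_comm _ _
  calc volume _ ≤ volume {x | |f.eval x| ≤ r ^ f.natDegree} :=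
        measure_mono fun x hx => hthreshold ▸ hx.2
    _ ≤ ENNReal.ofReal (f.natDegree * (2 * r)) :=
        hf.volume_setOf_abs_eval_le_pow_le (by omega) (Real.rpow_nonneg hp0.le _)
    _ ≤ _ := ENNReal.ofReal_le_ofReal hwidth
end

section
/- Let f be a nonconstant real polynomial of degree n ≥ 1, let a ≤ b be real numbers, let M > 0, and set I := { x ∈ [a, b] : |f(x)| ≤ M }. Then ∫_I |f′(x)| dx ≤ 2nM. -/
/-!
Between two consecutive zeros of `f'` the derivative has constant sign, so on such an interval
the set `{|f| ≤ M}` lies in an interval `[c', d']` with `|f c'|, |f d'| ≤ M`, over which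
`∫ |f'| = |f d' - f c'| ≤ 2M`. Since `f'` has at most `n - 1` zeros, `[a, b]` splits into at
most `n` such intervals.
-/

open MeasureTheory Set Polynomial

theorem IsPreconnected.forall_pos_or_forall_neg {X α : Type*} [TopologicalSpace X]
    [TopologicalSpace α] [LinearOrder α] [OrderClosedTopology α] [Zero α] {s : Set X}
    (hs : IsPreconnected s) {g : X → α} (hg : ContinuousOn g s) (hg0 : ∀ x ∈ s, g x ≠ 0) :
    (∀ x ∈ s, 0 < g x) ∨ ∀ x ∈ s, g x < 0 := by
  by_contra! ⟨⟨x, hx, hgx⟩, y, hy, hgy⟩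
  obtain ⟨z, hz, hgz⟩ := hs.intermediate_value₂ hx hy hg continuousOn_const hgx hgy
  exact hg0 z hz hgz

theorem setIntegral_union_le {α : Type*} [MeasurableSpace α] {μ : Measure α} {g : α → ℝ}
    {s t : Set α} (hg : 0 ≤ g) (hs : IntegrableOn g s μ) (ht : IntegrableOn g t μ) :
    ∫ x in s ∪ t, g x ∂μ ≤ ∫ x in s, g x ∂μ + ∫ x in t, g x ∂μ := by
  rw [← integral_add_measure hs ht]
  exact integral_mono_measure (Measure.restrict_union_le s t) (ae_of_all _ hg)
    (hs.integrable.add_measure ht)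

section SublevelSet

variable {f f' : ℝ → ℝ} {M : ℝ}

theorem isCompact_Icc_inter_abs_le (hf : Continuous f) (c d : ℝ) :
    IsCompact (Icc c d ∩ {x | |f x| ≤ M}) :=
  isCompact_Icc.inter_right (isClosed_le hf.abs continuous_const)

theorem setIntegral_abs_deriv_sublevel_le_of_nonneg (hf : ∀ x, HasDerivAt f (f' x) x)
    (hf' : Continuous f') (hM : 0 ≤ M) {c d : ℝ}
    (hpos : ∀ x ∈ Ioo c d, 0 ≤ f' x) :
    ∫ x in Icc c d ∩ {x | |f x| ≤ M}, |f' x| ≤ 2 * M := by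
  set S := Icc c d ∩ {x | |f x| ≤ M}
  rcases S.eq_empty_or_nonempty with hS | hS
  · simp [hS, hM]
  have hcont : Continuous f := continuous_iff_continuousAt.mpr fun x => (hf x).continuousAt
  have hSc : IsCompact S := isCompact_Icc_inter_abs_le hcont c d
  have hinf := hSc.sInf_mem hS
  have hsup := hSc.sSup_mem hS
  set c' := sInf S
  set d' := sSup S
  have hsub : S ⊆ Icc c' d' := fun x hx =>
    ⟨csInf_le hSc.bddBelow hx, le_csSup hSc.bddAbove hx⟩
  have hcd' : c' ≤ d' := (hsub hinf).2
  have hftc : ∫ x in c'..d', |f' x| = f d' - f c' := by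
    refine intervalIntegral.integral_eq_sub_of_hasDerivAt_of_le hcd' hcont.continuousOn
      (fun x hx => ?_) (hf'.abs.intervalIntegrable _ _)
    rw [abs_of_nonneg (hpos x ⟨hinf.1.1.trans_lt hx.1, hx.2.trans_le hsup.1.2⟩)]
    exact hf x
  calc ∫ x in S, |f' x| ≤ ∫ x in Icc c' d', |f' x| :=
        setIntegral_mono_set hf'.abs.integrableOn_Icc (ae_of_all _ fun _ => abs_nonneg _)
          hsub.eventuallyLE
    _ = f d' - f c' := by
        rw [integral_Icc_eq_integral_Ioc, ← intervalIntegral.integral_of_le hcd', hftc]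
    _ ≤ 2 * M := by
        have hc'M : |f c'| ≤ M := hinf.2
        have hd'M : |f d'| ≤ M := hsup.2
        linarith [abs_le.mp hc'M, abs_le.mp hd'M]

theorem setIntegral_abs_deriv_sublevel_le_of_ne_zero (hf : ∀ x, HasDerivAt f (f' x) x)
    (hf' : Continuous f') (hM : 0 ≤ M) {c d : ℝ}
    (hne : ∀ x ∈ Ioo c d, f' x ≠ 0) :
    ∫ x in Icc c d ∩ {x | |f x| ≤ M}, |f' x| ≤ 2 * M := by
  rcases isPreconnected_Ioo.forall_pos_or_forall_neg hf'.continuousOn hne with hpos | hneg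
  · exact setIntegral_abs_deriv_sublevel_le_of_nonneg hf hf' hM fun x hx => (hpos x hx).le
  · simpa only [Pi.neg_apply, abs_neg] using
      setIntegral_abs_deriv_sublevel_le_of_nonneg (f := -f) (f' := -f') (fun x => (hf x).neg)
        hf'.neg hM fun x hx => neg_nonneg.mpr (hneg x hx).le

theorem setIntegral_abs_deriv_sublevel_le_card (hf : ∀ x, HasDerivAt f (f' x) x)
    (hf' : Continuous f') (hM : 0 ≤ M) (s : Finset ℝ)
    {c d : ℝ} (hs : ∀ x ∈ Ioo c d, f' x = 0 → x ∈ s) :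
    ∫ x in Icc c d ∩ {x | |f x| ≤ M}, |f' x| ≤ 2 * (s.card + 1) * M := by
  induction s using Finset.induction_on_max generalizing d with
  | empty =>
    simpa using setIntegral_abs_deriv_sublevel_le_of_ne_zero hf hf' hM fun x hx h0 =>
      Finset.notMem_empty x (hs x hx h0)
  | insert r s hlt ih =>
    rw [Finset.card_insert_of_notMem fun hr => (hlt r hr).false]
    push_cast
    by_cases hr : r ∈ Ioo c d
    · have hleft := ih fun x hx h0 =>
        (Finset.mem_insert.mp (hs x ⟨hx.1, hx.2.trans hr.2⟩ h0)).resolve_left hx.2.ne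
      have hright := setIntegral_abs_deriv_sublevel_le_of_ne_zero hf hf' hM (c := r) (d := d)
        fun x hx h0 => by
          rcases Finset.mem_insert.mp (hs x ⟨hr.1.trans hx.1, hx.2⟩ h0) with rfl | hxs
          exacts [hx.1.false, (hlt x hxs).asymm hx.1]
      have hint (u v : ℝ) : IntegrableOn (fun x => |f' x|) (Icc u v ∩ {x | |f x| ≤ M}) :=
        hf'.abs.integrableOn_Icc.mono_set inter_subset_left
      calc ∫ x in Icc c d ∩ {x | |f x| ≤ M}, |f' x|
          ≤ (∫ x in Icc c r ∩ {x | |f x| ≤ M}, |f' x|) +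
              ∫ x in Icc r d ∩ {x | |f x| ≤ M}, |f' x| := by
            rw [← Icc_union_Icc_eq_Icc hr.1.le hr.2.le, union_inter_distrib_right]
            exact setIntegral_union_le (fun _ => abs_nonneg _) (hint c r) (hint r d)
        _ ≤ 2 * (s.card + 1) * M + 2 * M := add_le_add hleft hright
        _ = 2 * (s.card + 1 + 1) * M := by ring
    · have := ih fun x hx h0 => (Finset.mem_insert.mp (hs x hx h0)).resolve_left
        fun hxr => hr (hxr ▸ hx)
      linarith

end SublevelSet

theorem integral_abs_deriv_le_general (f : Polynomial ℝ) (n : ℕ) (hn : 1 ≤ n)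
    (hdeg : f.natDegree = n) (a b : ℝ) (M : ℝ) (hM : 0 < M) :
    ∫ x in {x : ℝ | x ∈ Set.Icc a b ∧ |f.eval x| ≤ M}, |f.derivative.eval x| ≤
      2 * n * M := by
  have hf' : derivative f ≠ 0 := by
    rw [Ne, derivative_eq_zero]
    omega
  have hcard : f.derivative.roots.toFinset.card + 1 ≤ n := calc
    _ ≤ f.derivative.natDegree + 1 := by
      gcongr
      exact (Multiset.toFinset_card_le _).trans (card_roots' _)
    _ ≤ n := hdeg ▸ natDegree_derivative_lt (by omega)
  calc _ ≤ 2 * (f.derivative.roots.toFinset.card + 1) * M :=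
        setIntegral_abs_deriv_sublevel_le_card (fun x => f.hasDerivAt x)
          f.derivative.continuous hM.le _ fun x _ hx => by simp [hf', hx]
    _ ≤ 2 * n * M := by gcongr; exact_mod_cast hcard

/-- If `f` is a real polynomial of degree `n ≥ 1`, `a ≤ b`, `M > 0` and
`I = { x ∈ [a, b] : |f(x)| ≤ M }`, then `∫_I |f′(x)| dx ≤ 2nM`. -/
theorem integral_abs_deriv_le (f : Polynomial ℝ) (n : ℕ) (hn : 1 ≤ n)
    (hdeg : f.natDegree = n) (a b : ℝ) (hab : a ≤ b) (M : ℝ) (hM : 0 < M) :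
    ∫ x in {x : ℝ | x ∈ Set.Icc a b ∧ |f.eval x| ≤ M}, |f.derivative.eval x| ≤
      2 * n * M :=
  integral_abs_deriv_le_general f n hn hdeg a b M hM
end

section
/- Let p be a prime, g ≥ 1 an integer, and a₁, …, a_g integers, and suppose that the polynomial F(a₁, …, a_g) is irreducible over ℚ. Let K be a number field containing a root π of F(a₁, …, a_g) (so that [ℚ(π) : ℚ] = 2g), and set π̄ := p/π, which is again an algebraic integer in K. Let R := ℤ[π, π̄] and ℤ[π] be the subrings of K generated over ℤ by {π, π̄} and {π} respectively. Then ℤ[π] has finite index in R as an additive group, and [R : ℤ[π]] ≤ p^{g(g−1)/2}. -/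
/-! Put `σ = p/π`, so `πσ = p`, and let `M_m` be the `ℤ[π]`-span of `1, σ, …, σ^m`
(`monomialSpan π σ m`, spanned over `ℤ` by the `π^i σ^k` with `k ≤ m`). Dividing `F(π) = 0` by
`π^g` gives the symmetric relation `π^g + σ^g + ∑ aᵢ (π^{g-i} + σ^{g-i}) + a_g = 0`, so
`σ^g ∈ M_{g-1}`; then `M_{g-1}` is stable under multiplication by `σ` and contains `R`.
In the chain `ℤ[π] = M_0 ⊆ ⋯ ⊆ M_{g-1}` the quotient `M_m / M_{m-1}` is cyclic, generated by
`σ^m`, and killed by `p^{g-m}`, because `p^{g-m} σ^m = π^{g-m} σ^g ∈ π^{g-m} M_{g-1} ⊆ M_{m-1}`.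
Hence `[R : ℤ[π]]` divides `p^{(g-1) + ⋯ + 1} = p^{g(g-1)/2}`. -/

/-- The monic integer polynomial
`F(a₁,…,a_g) = (x^{2g}+p^g) + a₁(x^{2g−1}+p^{g−1}x) + ⋯ + a_{g−1}(x^{g+1}+p·x^{g−1}) + a_g x^g`,
where `a i` denotes `a_{i+1}`. -/
noncomputable def FpolyInt (p g : ℕ) (a : Fin g → ℤ) : Polynomial ℤ :=
  (Polynomial.X ^ (2 * g) + Polynomial.C ((p : ℤ) ^ g)) +
    ∑ i : Fin g,
      Polynomial.C (a i) *
        (if (i : ℕ) + 1 = g then Polynomial.X ^ g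
         else Polynomial.X ^ (2 * g - ((i : ℕ) + 1)) +
           Polynomial.C ((p : ℤ) ^ (g - ((i : ℕ) + 1))) * Polynomial.X ^ ((i : ℕ) + 1))

open Finset

namespace AddSubgroup

theorem relIndex_sup_zmultiples_dvd {G : Type*} [AddCommGroup G] {H : AddSubgroup G} {x : G}
    {n : ℤ} (hx : n • x ∈ H) : H.relIndex (H ⊔ zmultiples x) ∣ n.natAbs := by
  rw [relIndex_sup_left, ← range_zmultiplesHom, ← index_comap, ← Int.index_zmultiples]
  exact index_dvd_of_le (zmultiples_le.mpr (by simpa using hx))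

theorem relIndex_dvd_of_le_right {G : Type*} [AddGroup G] {H K L : AddSubgroup G} (hHK : H ≤ K)
    (hKL : K ≤ L) : H.relIndex K ∣ H.relIndex L :=
  Dvd.intro _ (relIndex_mul_relIndex H K L hHK hKL)

theorem relIndex_dvd_prod_of_monotone {G : Type*} [AddGroup G] {H : ℕ → AddSubgroup G}
    (hH : Monotone H) {b : ℕ → ℕ} {n : ℕ} (hb : ∀ m < n, (H m).relIndex (H (m + 1)) ∣ b m) :
    (H 0).relIndex (H n) ∣ ∏ m ∈ range n, b m := by
  induction n with
  | zero => simp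
  | succ n ih =>
    rw [← relIndex_mul_relIndex _ _ _ (hH n.zero_le) (hH n.le_succ), prod_range_succ]
    exact mul_dvd_mul (ih fun m hm => hb m (by omega)) (hb n n.lt_succ_self)

end AddSubgroup

theorem Finset.sum_range_sub_id (n : ℕ) : ∑ m ∈ range n, (n - m) = (n + 1) * n / 2 := by
  have h := sum_range_id (n + 1)
  rw [← sum_range_reflect, sum_range_succ] at h
  simpa using h

theorem Algebra.adjoin_toSubmodule_le_of_mul_mem {R A : Type*} [CommSemiring R] [Semiring A]
    [Algebra R A] {s : Set A} {N : Submodule R A} (h1 : 1 ∈ N)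
    (hs : ∀ x ∈ s, ∀ y ∈ N, x * y ∈ N) : Subalgebra.toSubmodule (Algebra.adjoin R s) ≤ N := by
  intro z hz
  suffices ∀ y ∈ N, z * y ∈ N by simpa using this 1 h1
  induction hz using Algebra.adjoin_induction with
  | mem x hx => exact hs x hx
  | algebraMap r => exact fun y hy => by simpa [Algebra.smul_def] using N.smul_mem r hy
  | add x y _ _ hx hy => exact fun w hw => by simpa [add_mul] using N.add_mem (hx w hw) (hy w hw)
  | mul x y _ _ hx hy => exact fun w hw => by simpa [mul_assoc] using hx _ (hy w hw)

section MonomialSpan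

variable {K : Type*} [CommRing K] (π σ : K)

def monomialSpan (m : ℕ) : Submodule ℤ K :=
  Submodule.span ℤ {x | ∃ i k, k ≤ m ∧ π ^ i * σ ^ k = x}

variable {π σ}

theorem monomial_mem_monomialSpan {i k m : ℕ} (hk : k ≤ m) :
    π ^ i * σ ^ k ∈ monomialSpan π σ m :=
  Submodule.subset_span ⟨i, k, hk, rfl⟩

theorem pow_mem_monomialSpan_left (i m : ℕ) : π ^ i ∈ monomialSpan π σ m := by
  simpa using monomial_mem_monomialSpan (π := π) (σ := σ) (i := i) m.zero_le

theorem pow_mem_monomialSpan_right {k m : ℕ} (hk : k ≤ m) : σ ^ k ∈ monomialSpan π σ m := by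
  simpa using monomial_mem_monomialSpan (π := π) (σ := σ) (i := 0) hk

theorem one_mem_monomialSpan (m : ℕ) : (1 : K) ∈ monomialSpan π σ m := by
  simpa using pow_mem_monomialSpan_left (π := π) (σ := σ) 0 m

theorem monomialSpan_mono : Monotone (monomialSpan π σ) := fun _ _ h =>
  Submodule.span_mono fun _ ⟨i, k, hk, hx⟩ => ⟨i, k, hk.trans h, hx⟩

theorem mul_mem_monomialSpan {c : K} {m m' : ℕ}
    (hc : ∀ i k, k ≤ m → c * (π ^ i * σ ^ k) ∈ monomialSpan π σ m') {x : K}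
    (hx : x ∈ monomialSpan π σ m) : c * x ∈ monomialSpan π σ m' := by
  have : monomialSpan π σ m ≤ (monomialSpan π σ m').comap (LinearMap.mulLeft ℤ c) :=
    Submodule.span_le.mpr fun _ ⟨i, k, hk, hx⟩ => hx ▸ hc i k hk
  exact this hx

theorem mul_mem_monomialSpan_succ {m : ℕ} {x : K} (hx : x ∈ monomialSpan π σ m) :
    σ * x ∈ monomialSpan π σ (m + 1) :=
  mul_mem_monomialSpan (fun i k hk => by
    rw [mul_left_comm, ← pow_succ']; exact monomial_mem_monomialSpan (by omega)) hx

theorem monomialSpan_zero :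
    monomialSpan π σ 0 = Subalgebra.toSubmodule (Algebra.adjoin ℤ {π}) := by
  refine le_antisymm (Submodule.span_le.mpr ?_)
    (Algebra.adjoin_toSubmodule_le_of_mul_mem (one_mem_monomialSpan 0) ?_)
  · rintro _ ⟨i, k, hk, rfl⟩
    rw [Nat.le_zero.mp hk, pow_zero, mul_one]
    exact pow_mem (Algebra.subset_adjoin (Set.mem_singleton π)) i
  · rintro _ rfl y hy
    exact mul_mem_monomialSpan (fun i k hk => by
      rw [← mul_assoc, ← pow_succ']; exact monomial_mem_monomialSpan hk) hy

variable {q : ℤ}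

theorem pow_mul_pow_mem_monomialSpan (h : π * σ = q) {a b m : ℕ} (hb : b ≤ a + m) :
    π ^ a * σ ^ b ∈ monomialSpan π σ m := by
  rcases le_total b a with hba | hab
  · obtain ⟨c, rfl⟩ := Nat.exists_eq_add_of_le hba
    have : π ^ (b + c) * σ ^ b = q ^ b • π ^ c := by
      rw [zsmul_eq_mul]; push_cast; rw [← h]; ring
    exact this ▸ Submodule.smul_mem _ _ (pow_mem_monomialSpan_left c m)
  · obtain ⟨c, rfl⟩ := Nat.exists_eq_add_of_le hab
    have : π ^ a * σ ^ (a + c) = q ^ a • σ ^ c := by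
      rw [zsmul_eq_mul]; push_cast; rw [← h]; ring
    exact this ▸ Submodule.smul_mem _ _ (pow_mem_monomialSpan_right (by omega))

theorem pow_mul_mem_monomialSpan (h : π * σ = q) {m n : ℕ} {x : K}
    (hx : x ∈ monomialSpan π σ (m + n)) : π ^ n * x ∈ monomialSpan π σ m :=
  mul_mem_monomialSpan (fun i k hk => by
    rw [← mul_assoc, ← pow_add]; exact pow_mul_pow_mem_monomialSpan h (by omega)) hx

theorem monomialSpan_succ_le_sup (h : π * σ = q) (m : ℕ) :
    (monomialSpan π σ (m + 1)).toAddSubgroup ≤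
      (monomialSpan π σ m).toAddSubgroup ⊔ AddSubgroup.zmultiples (σ ^ (m + 1)) := by
  rw [← Submodule.span_singleton_toAddSubgroup_eq_zmultiples, ← Submodule.sup_toAddSubgroup,
    Submodule.toAddSubgroup_le]
  refine Submodule.span_le.mpr ?_
  rintro _ ⟨i, k, hk, rfl⟩
  rcases hk.lt_or_eq with hk | rfl
  · exact Submodule.mem_sup_left (monomial_mem_monomialSpan (by omega))
  rcases i with _ | i
  · simpa using Submodule.mem_sup_right (Submodule.mem_span_singleton_self _)
  · exact Submodule.mem_sup_left (pow_mul_pow_mem_monomialSpan h (by omega))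

section Stable

variable (h : π * σ = q) {n : ℕ} (hσ : σ ^ (n + 1) ∈ monomialSpan π σ n)
include h hσ

theorem monomialSpan_succ_le : monomialSpan π σ (n + 1) ≤ monomialSpan π σ n := by
  refine Submodule.span_le.mpr ?_
  rintro _ ⟨i, k, hk, rfl⟩
  rcases hk.lt_or_eq with hk | rfl
  · exact monomial_mem_monomialSpan (by omega)
  · exact pow_mul_mem_monomialSpan h (monomialSpan_mono (by omega) hσ)

theorem adjoin_le_monomialSpan :
    Subalgebra.toSubmodule (Algebra.adjoin ℤ {π, σ}) ≤ monomialSpan π σ n := by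
  refine Algebra.adjoin_toSubmodule_le_of_mul_mem (one_mem_monomialSpan n) ?_
  rintro _ (rfl | rfl) y hy
  · simpa using pow_mul_mem_monomialSpan (n := 1) h (monomialSpan_mono n.le_succ hy)
  · exact monomialSpan_succ_le h hσ (mul_mem_monomialSpan_succ hy)

theorem pow_smul_pow_mem_monomialSpan {m : ℕ} (hm : m ≤ n) :
    q ^ (n - m) • σ ^ (m + 1) ∈ monomialSpan π σ m := by
  have : q ^ (n - m) • σ ^ (m + 1) = π ^ (n - m) * σ ^ (n + 1) := by
    rw [zsmul_eq_mul]; push_cast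
    rw [← h, mul_pow, mul_assoc, ← pow_add]; congr 2; omega
  exact this ▸ pow_mul_mem_monomialSpan h (by rwa [Nat.add_sub_cancel' hm])

theorem relIndex_monomialSpan_zero_dvd :
    (monomialSpan π σ 0).toAddSubgroup.relIndex (monomialSpan π σ n).toAddSubgroup ∣
      q.natAbs ^ ((n + 1) * n / 2) := by
  rw [← sum_range_sub_id, ← prod_pow_eq_pow_sum]
  refine AddSubgroup.relIndex_dvd_prod_of_monotone
    (Submodule.toAddSubgroup_mono.comp monomialSpan_mono) fun m hm => ?_
  rw [← Int.natAbs_pow]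
  refine (AddSubgroup.relIndex_dvd_of_le_right (Submodule.toAddSubgroup_mono
    (monomialSpan_mono m.le_succ)) (monomialSpan_succ_le_sup h m)).trans ?_
  exact AddSubgroup.relIndex_sup_zmultiples_dvd (pow_smul_pow_mem_monomialSpan h hσ hm.le)

end Stable

end MonomialSpan

section FpolyInt

open Polynomial

variable {p g : ℕ} (a : Fin g → ℤ)

theorem eval_zero_FpolyInt (hg : 1 ≤ g) : (FpolyInt p g a).eval 0 = (p : ℤ) ^ g := by
  rw [FpolyInt, eval_add, eval_finsetSum, sum_eq_zero]
  · simp [show g ≠ 0 by omega]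
  · intro i _
    have := i.2
    split_ifs <;> simp <;> omega

variable {K : Type*} [CommRing K] {π σ : K}

theorem ne_zero_of_aeval_FpolyInt_eq_zero [CharZero K] (hp : p ≠ 0) (hg : 1 ≤ g)
    (hroot : aeval π (FpolyInt p g a) = 0) : π ≠ 0 := by
  rintro rfl
  rw [← map_zero (algebraMap ℤ K), aeval_algebraMap_apply_eq_algebraMap_eval,
    eval_zero_FpolyInt a hg] at hroot
  exact pow_ne_zero g hp (by exact_mod_cast hroot)

theorem aeval_FpolyInt (h : π * σ = p) :
    aeval π (FpolyInt p g a) = π ^ g * (π ^ g + σ ^ g + ∑ i : Fin g, (a i : K) *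
      if (i : ℕ) + 1 = g then 1 else π ^ (g - (i + 1)) + σ ^ (g - (i + 1))) := by
  simp only [FpolyInt, map_add, map_sum, map_mul, map_pow, aeval_X, apply_ite (aeval π),
    eq_intCast, map_natCast, map_intCast, mul_add, mul_sum]
  rw [← h, mul_pow, ← pow_add, ← two_mul]
  congr 1
  refine sum_congr rfl fun i _ => ?_
  obtain ⟨c, hc⟩ := Nat.exists_eq_add_of_lt i.2
  have hπg : π ^ g = π ^ ((i : ℕ) + 1) * π ^ c := by rw [← pow_add]; congr 1; omega
  rw [show 2 * g - (i + 1) = g + c by omega, show g - (i + 1) = c by omega]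
  split_ifs
  · ring
  · rw [pow_add, hπg]; ring

theorem pow_mem_monomialSpan_of_aeval_FpolyInt_eq_zero [IsDomain K] (h : π * σ = p)
    (hπ : π ≠ 0) (hroot : aeval π (FpolyInt p g a) = 0) : σ ^ g ∈ monomialSpan π σ (g - 1) := by
  rw [aeval_FpolyInt a h, mul_eq_zero, or_iff_right (pow_ne_zero g hπ)] at hroot
  rw [show σ ^ g = -(π ^ g + ∑ i : Fin g, (a i : K) *
      if (i : ℕ) + 1 = g then 1 else π ^ (g - (i + 1)) + σ ^ (g - (i + 1))) by
    linear_combination hroot]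
  refine neg_mem (add_mem (pow_mem_monomialSpan_left _ _) (sum_mem fun i _ => ?_))
  rw [← zsmul_eq_mul]
  refine Submodule.smul_mem _ _ ?_
  split_ifs
  · exact one_mem_monomialSpan _
  · exact add_mem (pow_mem_monomialSpan_left _ _) (pow_mem_monomialSpan_right (by omega))

end FpolyInt

theorem index_Zpi_in_R_le_general (p : ℕ) (hp : p.Prime) (g : ℕ) (hg : 1 ≤ g) (a : Fin g → ℤ)
    (K : Type*) [Field K] [NumberField K] (π : K)
    (hroot : Polynomial.aeval π (FpolyInt p g a) = 0) :
    (Subalgebra.toSubmodule (Algebra.adjoin ℤ {π})).toAddSubgroup.relIndex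
        (Subalgebra.toSubmodule (Algebra.adjoin ℤ {π, (p : K) / π})).toAddSubgroup ≠ 0 ∧
    (Subalgebra.toSubmodule (Algebra.adjoin ℤ {π})).toAddSubgroup.relIndex
        (Subalgebra.toSubmodule (Algebra.adjoin ℤ {π, (p : K) / π})).toAddSubgroup ≤
      p ^ (g * (g - 1) / 2) := by
  set σ := (p : K) / π
  have hπ := ne_zero_of_aeval_FpolyInt_eq_zero a hp.ne_zero hg hroot
  have hπσ : π * σ = p := mul_div_cancel₀ _ hπ
  have hσ := pow_mem_monomialSpan_of_aeval_FpolyInt_eq_zero a hπσ hπ hroot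
  obtain ⟨n, rfl⟩ : ∃ n, g = n + 1 := ⟨g - 1, by omega⟩
  rw [Nat.add_sub_cancel] at hσ ⊢
  have hπσ' : π * σ = ((p : ℤ) : K) := by rwa [Int.cast_natCast]
  have hdvd := relIndex_monomialSpan_zero_dvd hπσ' hσ
  rw [Int.natAbs_natCast, monomialSpan_zero] at hdvd
  have hAR : (Subalgebra.toSubmodule (Algebra.adjoin ℤ {π})).toAddSubgroup ≤
      (Subalgebra.toSubmodule (Algebra.adjoin ℤ {π, σ})).toAddSubgroup :=
    fun _ hx => Algebra.adjoin_mono (Set.singleton_subset_iff.mpr (Set.mem_insert π {σ})) hx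
  have hRM : (Subalgebra.toSubmodule (Algebra.adjoin ℤ {π, σ})).toAddSubgroup ≤
      (monomialSpan π σ n).toAddSubgroup := adjoin_le_monomialSpan hπσ' hσ
  have hR := (AddSubgroup.relIndex_dvd_of_le_right hAR hRM).trans hdvd
  have hpow : p ^ ((n + 1) * n / 2) ≠ 0 := pow_ne_zero _ hp.ne_zero
  exact ⟨ne_zero_of_dvd_ne_zero hpow hR, Nat.le_of_dvd (Nat.pos_of_ne_zero hpow) hR⟩

/-- If `F(a₁,…,a_g)` is irreducible over `ℚ` with root `π` in a number field `K`, and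
`π̄ = p/π`, then `ℤ[π]` has finite additive index in `R = ℤ[π, π̄]`, and this index is at most
`p^{g(g−1)/2}`. -/
theorem index_Zpi_in_R_le (p : ℕ) (hp : p.Prime) (g : ℕ) (hg : 1 ≤ g) (a : Fin g → ℤ)
    (K : Type*) [Field K] [NumberField K] (π : K)
    (hirr : Irreducible ((FpolyInt p g a).map (Int.castRingHom ℚ)))
    (hroot : Polynomial.aeval π (FpolyInt p g a) = 0) :
    (Subalgebra.toSubmodule (Algebra.adjoin ℤ {π})).toAddSubgroup.relIndex
        (Subalgebra.toSubmodule (Algebra.adjoin ℤ {π, (p : K) / π})).toAddSubgroup ≠ 0 ∧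
    (Subalgebra.toSubmodule (Algebra.adjoin ℤ {π})).toAddSubgroup.relIndex
        (Subalgebra.toSubmodule (Algebra.adjoin ℤ {π, (p : K) / π})).toAddSubgroup ≤
      p ^ (g * (g - 1) / 2) :=
  index_Zpi_in_R_le_general p hp g hg a K π hroot
end

section
/- For every prime p and every ε > 0 there exists g₀ such that for every integer g ≥ g₀ and all real numbers x₁, …, x_g ∈ [−2√p, 2√p]: ∏_{1 ≤ i < j ≤ g} (x_j − x_i)² ≤ p^{(1/2 + ε)g²}. -/
/-!
Write `x = √p • y` with `y i ∈ [-2, 2]`; then `∏_{i<j} (x_j - x_i)² = p ^ (g choose 2) * det V(y)²`.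
Replacing the monomial columns of the Vandermonde matrix `V(y)` by monic polynomials of the same
degrees does not change its determinant. For the rescaled Chebyshev polynomials,
`C_j(2 cos θ) = 2 cos (j θ)`, every entry is bounded by `2` on `[-2, 2]` (the interval of
capacity `1`), so `|det V(y)| ≤ g! 2^g`, and `(g! 2^g)² ≤ (2g)^(2g) = p^(o(g²))`.
-/

open Polynomial Finset Filter
open scoped Nat

namespace Polynomial.Chebyshev

variable {R : Type*} [CommRing R] [IsDomain R] [NeZero (2 : R)]

theorem natDegree_C (n : ℤ) : (C R n).natDegree = n.natAbs := by
  have h := congr_arg natDegree (C_comp_two_mul_X R n)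
  rwa [natDegree_comp, ← C_ofNat, natDegree_C_mul_X _ two_ne_zero, mul_one,
    natDegree_C_mul two_ne_zero, natDegree_T] at h

theorem monic_C {n : ℤ} (hn : n ≠ 0) : (C R n).Monic := by
  have h := congr_arg leadingCoeff (C_comp_two_mul_X R n)
  rw [← C_ofNat, leadingCoeff_comp (by rw [natDegree_C_mul_X _ two_ne_zero]; exact one_ne_zero),
    leadingCoeff_C_mul_X, natDegree_C, leadingCoeff_mul, leadingCoeff_C, leadingCoeff_T,
    ← pow_succ', Nat.sub_add_cancel (Int.natAbs_pos.mpr hn)] at h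
  exact mul_eq_right₀ (pow_ne_zero _ two_ne_zero) |>.mp h

theorem abs_eval_C_le_two (n : ℤ) {y : ℝ} (hy : |y| ≤ 2) : |(C ℝ n).eval y| ≤ 2 := by
  obtain ⟨θ, rfl⟩ : ∃ θ, y = 2 * Real.cos θ :=
    ⟨Real.arccos (y / 2), by rw [Real.cos_arccos] <;> linarith [abs_le.mp hy]⟩
  rw [C_two_mul_real_cos, abs_mul, abs_two]
  exact mul_le_of_le_one_right zero_le_two (Real.abs_cos_le_one _)

end Polynomial.Chebyshev

open Polynomial.Chebyshev in
theorem Matrix.abs_det_vandermonde_le {n : ℕ} (y : Fin n → ℝ) (hy : ∀ i, |y i| ≤ 2) :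
    |(Matrix.vandermonde y).det| ≤ n ! * 2 ^ n := by
  -- `C 0 = 2` is not monic, so the constant column uses `1` instead.
  let P : Fin n → ℝ[X] := fun j => if (j : ℕ) = 0 then 1 else C ℝ j
  have hdeg : ∀ j, (P j).natDegree = j := fun j => by
    by_cases hj : (j : ℕ) = 0 <;> simp [P, hj, Chebyshev.natDegree_C]
  have hmonic : ∀ j, (P j).Monic := fun j => by
    by_cases hj : (j : ℕ) = 0
    · simp [P, hj]
    · simpa [P, hj] using monic_C (R := ℝ) (Int.natCast_ne_zero.mpr hj)
  have hentry : ∀ i j, |(P j).eval (y i)| ≤ 2 := fun i j => by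
    by_cases hj : (j : ℕ) = 0
    · simp [P, hj]
    · simpa [P, hj] using abs_eval_C_le_two j (hy i)
  rw [Matrix.det_eval_matrixOfPolynomials_eq_det_vandermonde y P hdeg hmonic]
  simpa using Matrix.det_le (abv := AbsoluteValue.abs) (A := Matrix.of _) hentry

theorem Fin.prod_prod_Ioi_const {M : Type*} [CommMonoid M] (n : ℕ) (c : M) :
    ∏ i : Fin n, ∏ _j ∈ Ioi i, c = c ^ n.choose 2 := by
  simp only [Finset.prod_const, prod_pow_eq_pow_sum, Fin.card_Ioi]
  rw [Fin.sum_univ_eq_sum_range (fun i => n - 1 - i), sum_range_reflect (fun i => i),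
    sum_range_id, Nat.choose_two_right]

theorem prod_sq_sub_le_of_mem_Icc {n : ℕ} {r : ℝ} (hr : 0 < r) (x : Fin n → ℝ)
    (hx : ∀ i, x i ∈ Set.Icc (-(2 * r)) (2 * r)) :
    ∏ i : Fin n, ∏ j ∈ Ioi i, (x j - x i) ^ 2 ≤ (r ^ 2) ^ n.choose 2 * (n ! * 2 ^ n) ^ 2 := by
  set y : Fin n → ℝ := fun i => x i / r
  have hy : ∀ i, |y i| ≤ 2 := fun i => by
    rw [abs_div, abs_of_pos hr, div_le_iff₀ hr, abs_le]; exact hx i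
  have hxy : ∀ i j, (x j - x i) ^ 2 = r ^ 2 * (y j - y i) ^ 2 := fun i j => by
    simp only [y]; field_simp
  have hdet : ∏ i : Fin n, ∏ j ∈ Ioi i, (y j - y i) ^ 2 = (Matrix.vandermonde y).det ^ 2 := by
    simp only [Matrix.det_vandermonde, prod_pow]
  simp only [hxy, prod_mul_distrib, Fin.prod_prod_Ioi_const, hdet]
  rw [← sq_abs (Matrix.vandermonde y).det]
  gcongr
  exact Matrix.abs_det_vandermonde_le y hy

theorem eventually_sq_factorial_mul_two_pow_le {r : ℝ} (hr : 1 < r) :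
    ∀ᶠ n : ℕ in atTop, ((n ! : ℝ) * 2 ^ n) ^ 2 ≤ r ^ (n ^ 2) := by
  have hsmall : ∀ᶠ n : ℕ in atTop, (n : ℝ) ^ 2 / r ^ n ≤ 1 / 4 :=
    (tendsto_pow_const_div_const_pow_of_one_lt 2 hr).eventually (ge_mem_nhds (by norm_num))
  filter_upwards [hsmall] with n hn
  have hpoly : (2 * (n : ℝ)) ^ 2 ≤ r ^ n := by
    rw [div_le_iff₀ (by positivity)] at hn; nlinarith
  calc ((n ! : ℝ) * 2 ^ n) ^ 2 ≤ ((n : ℝ) ^ n * 2 ^ n) ^ 2 := by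
        gcongr; exact_mod_cast n.factorial_le_pow
    _ = ((2 * (n : ℝ)) ^ 2) ^ n := by
        rw [← mul_pow, ← pow_mul, ← pow_mul, mul_comm (n : ℝ), mul_comm n]
    _ ≤ (r ^ n) ^ n := by gcongr
    _ = r ^ (n ^ 2) := by rw [← pow_mul, sq]

/-- For every prime `p` and every `ε > 0` there is `g₀` such that for all `g ≥ g₀` and all real
numbers `x₁, …, x_g ∈ [−2√p, 2√p]`: `∏_{i<j} (x_j − x_i)² ≤ p^{(1/2+ε)g²}`. -/
theorem vandermonde_real_interval_bound (p : ℕ) (hp : p.Prime) (ε : ℝ) (hε : 0 < ε) :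
    ∃ g₀ : ℕ, ∀ g : ℕ, g₀ ≤ g →
      ∀ x : Fin g → ℝ, (∀ i, x i ∈ Set.Icc (-(2 * Real.sqrt p)) (2 * Real.sqrt p)) →
        ∏ i : Fin g, ∏ j ∈ Finset.Ioi i, (x j - x i) ^ 2 ≤
          (p : ℝ) ^ ((1 / 2 + ε) * (g : ℝ) ^ 2) := by
  have hp1 : (1 : ℝ) < p := mod_cast hp.one_lt
  obtain ⟨g₀, hg₀⟩ :=
    eventually_atTop.mp (eventually_sq_factorial_mul_two_pow_le (Real.one_lt_rpow hp1 hε))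
  refine ⟨g₀, fun g hg x hx => ?_⟩
  have hpairs : (g.choose 2 : ℝ) ≤ 1 / 2 * (g : ℝ) ^ 2 := by
    rw [Nat.cast_choose_two]; nlinarith [(g.cast_nonneg : (0 : ℝ) ≤ g)]
  calc ∏ i : Fin g, ∏ j ∈ Ioi i, (x j - x i) ^ 2
      ≤ (Real.sqrt p ^ 2) ^ g.choose 2 * (g ! * 2 ^ g) ^ 2 :=
        prod_sq_sub_le_of_mem_Icc (Real.sqrt_pos.mpr (by positivity)) x hx
    _ ≤ (p : ℝ) ^ (1 / 2 * (g : ℝ) ^ 2) * ((p : ℝ) ^ ε) ^ (g ^ 2) := by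
        rw [Real.sq_sqrt (by positivity), ← Real.rpow_natCast (p : ℝ) (g.choose 2)]
        gcongr
        · exact hp1.le
        · exact hg₀ g hg
    _ = (p : ℝ) ^ ((1 / 2 + ε) * (g : ℝ) ^ 2) := by
        rw [add_mul, Real.rpow_add (by positivity), Real.rpow_mul (by positivity : (0 : ℝ) ≤ p) ε,
          ← Real.rpow_natCast (_ ^ ε)]
        norm_cast
end
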